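/- arXiv:2507.16338 — 4 statements merged into one kernel-verified Lean document; each statement's English description precedes it below -/
import Mathlib

section
/- Let μ be a finite Borel measure on the unit circle 𝕋 that is absolutely continuous with respect to the normalized arclength measure σ. For ν ∈ ℕ let p_ν : 𝕋 → 𝕋 be defined by p_ν(ζ) = ζ^ν. Then the pushforward measures (p_ν)_*μ converge weakly to μ(𝕋)·σ as ν → ∞. -/
open Complex MeasureTheory Metric Set Filter Topology
open scoped Real ENNReal

namespace StmtAux
open AddCircle

variable {T : ℝ} [hT : Fact (0 < T)]

lemma integrable_fourier_smul {f : AddCircle T → ℂ} (hf : Integrable f haarAddCircle) (n : ℤ) :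
    Integrable (fun x => fourier n x • f x) haarAddCircle := by
  simp only [smul_eq_mul]
  exact hf.bdd_mul ((map_continuous (fourier n)).aestronglyMeasurable)
    (c := 1) (Eventually.of_forall fun x => by rw [fourier_apply]; exact le_of_eq (Circle.norm_coe _))

lemma norm_fourierCoeff_le {f : AddCircle T → ℂ} (n : ℤ) :
    ‖fourierCoeff f n‖ ≤ ∫ x, ‖f x‖ ∂haarAddCircle := by
  refine (norm_integral_le_integral_norm _).trans (le_of_eq ?_)
  congr 1
  ext x
  rw [norm_smul, fourier_apply, Circle.norm_coe, one_mul]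

lemma integral_fourier_eq_zero {n : ℤ} (hn : n ≠ 0) :
    ∫ x, fourier n x ∂(haarAddCircle : Measure (AddCircle T)) = 0 :=
  integral_eq_zero_of_add_right_eq_neg (μ := haarAddCircle)
    (fourier_add_half_inv_index hn hT.elim)

end StmtAux

namespace StmtAux
open AddCircle

variable {T : ℝ} [hT : Fact (0 < T)]

lemma tendsto_fourierCoeff_of_memL2 {f : AddCircle T → ℂ} (hf : MemLp f 2 haarAddCircle) :
    Tendsto (fun n : ℤ => fourierCoeff f n) cofinite (𝓝 0) := by
  set g := hf.toLp f with hg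
  have hcoeff : ∀ n, fourierCoeff f n = fourierBasis.repr g n := by
    intro n
    rw [fourierBasis_repr]
    exact integral_congr_ae ((hf.coeFn_toLp).mono fun x hx => by simp only [hg, hx])
  have hmem : Memℓp (fun i => fourierBasis.repr g i) 2 := (fourierBasis.repr g).2
  have hs : Summable fun i => ‖fourierBasis.repr g i‖ ^ ((2 : ℝ≥0∞)).toReal :=
    (memℓp_gen_iff (by norm_num)).mp hmem
  have h0 : Tendsto (fun i => ‖fourierBasis.repr g i‖ ^ ((2 : ℝ≥0∞)).toReal) cofinite (𝓝 0) :=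
    hs.tendsto_cofinite_zero
  have h1 : Tendsto (fun i => ‖fourierBasis.repr g i‖) cofinite (𝓝 0) := by
    have h2 := h0.sqrt
    rw [Real.sqrt_zero] at h2
    convert h2 using 2 with i
    rw [ENNReal.toReal_ofNat, Real.rpow_two, Real.sqrt_sq (norm_nonneg _)]
  rw [tendsto_zero_iff_norm_tendsto_zero]
  simpa only [← hcoeff] using h1

lemma tendsto_fourierCoeff_of_integrable {w : AddCircle T → ℝ} (hmeas : Measurable w)
    (hw : Integrable w haarAddCircle) (hw0 : 0 ≤ w) :
    Tendsto (fun n : ℤ => fourierCoeff (fun x => (w x : ℂ)) n) cofinite (𝓝 0) := by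
  rw [Metric.tendsto_nhds]
  intro ε hε
  -- truncation
  have hconv : Tendsto (fun N : ℕ => ∫ x, |w x - min (w x) N| ∂haarAddCircle) atTop
      (𝓝 (∫ _x, (0 : ℝ) ∂(haarAddCircle : Measure (AddCircle T)))) := by
    apply tendsto_integral_of_dominated_convergence w
    · intro N
      exact ((hmeas.sub ((hmeas.min measurable_const))).abs).aestronglyMeasurable
    · exact hw
    · intro N
      filter_upwards with x
      have h1 : 0 ≤ min (w x) (N : ℝ) := le_min (hw0 x) (Nat.cast_nonneg N)
      have h2 : min (w x) (N : ℝ) ≤ w x := min_le_left _ _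
      rw [Real.norm_eq_abs, _root_.abs_abs, _root_.abs_of_nonneg (by linarith)]
      linarith
    · filter_upwards with x
      have hev : (fun N : ℕ => |w x - min (w x) N|) =ᶠ[atTop] (fun _ => (0 : ℝ)) := by
        filter_upwards [eventually_ge_atTop ⌈w x⌉₊] with N hN
        have : min (w x) (N : ℝ) = w x := min_eq_left ((Nat.le_ceil _).trans (by exact_mod_cast hN))
        rw [this, sub_self, abs_zero]
      exact Tendsto.congr' hev.symm tendsto_const_nhds
  rw [integral_zero] at hconv
  obtain ⟨N, hN⟩ := (hconv.eventually (gt_mem_nhds (by positivity : (0:ℝ) < ε/2))).exists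
  set u : AddCircle T → ℝ := fun x => min (w x) N with hu
  have humeas : Measurable u := hmeas.min measurable_const
  have huL2 : MemLp (fun x => (u x : ℂ)) 2 haarAddCircle := by
    apply MemLp.of_bound ((Complex.measurable_ofReal.comp humeas).aestronglyMeasurable) (N : ℝ)
    filter_upwards with x
    rw [Function.comp]
    rw [Complex.norm_real, Real.norm_eq_abs,
      _root_.abs_of_nonneg (le_min (hw0 x) (Nat.cast_nonneg N))]
    exact min_le_right _ _
  have huint : Integrable (fun x => (u x : ℂ)) haarAddCircle := huL2.integrable one_le_two
  have hwint : Integrable (fun x => (w x : ℂ)) haarAddCircle := hw.ofReal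
  have hsub : ∀ n : ℤ, fourierCoeff (fun x => (w x : ℂ)) n - fourierCoeff (fun x => (u x : ℂ)) n
      = fourierCoeff (fun x => ((w x : ℂ) - (u x : ℂ))) n := by
    intro n
    rw [fourierCoeff, fourierCoeff, fourierCoeff,
      ← integral_sub (integrable_fourier_smul hwint _) (integrable_fourier_smul huint _)]
    congr 1; ext x; rw [← smul_sub]
  have hdiff : ∀ n : ℤ, ‖fourierCoeff (fun x => ((w x : ℂ) - (u x : ℂ))) n‖ < ε / 2 := by
    intro n
    refine lt_of_le_of_lt (norm_fourierCoeff_le n) ?_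
    calc ∫ x, ‖(w x : ℂ) - (u x : ℂ)‖ ∂haarAddCircle
        = ∫ x, |w x - min (w x) N| ∂haarAddCircle := by
          congr 1; ext x
          rw [← Complex.ofReal_sub, Complex.norm_real, Real.norm_eq_abs]
      _ < ε / 2 := hN
  filter_upwards [(tendsto_fourierCoeff_of_memL2 huL2).eventually
      (Metric.ball_mem_nhds 0 (by positivity : (0:ℝ) < ε/2))] with n hn
  rw [dist_zero_right] at hn
  rw [dist_zero_right]
  have h3 : ‖fourierCoeff (fun x => (w x : ℂ)) n‖
      ≤ ‖fourierCoeff (fun x => (w x : ℂ)) n - fourierCoeff (fun x => (u x : ℂ)) n‖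
        + ‖fourierCoeff (fun x => (u x : ℂ)) n‖ := by
    simpa using norm_add_le (fourierCoeff (fun x => (w x : ℂ)) n
      - fourierCoeff (fun x => (u x : ℂ)) n) (fourierCoeff (fun x => (u x : ℂ)) n)
  rw [hsub n] at h3
  calc ‖fourierCoeff (fun x => (w x : ℂ)) n‖
      ≤ _ + _ := h3
    _ < ε / 2 + ε / 2 := add_lt_add (hdiff n) hn
    _ = ε := by ring

end StmtAux

namespace StmtAux
open AddCircle

variable {T : ℝ} [hT : Fact (0 < T)]

lemma tendsto_integral_fourier {m : Measure (AddCircle T)} [IsFiniteMeasure m]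
    (hm : m ≪ haarAddCircle) :
    Tendsto (fun n : ℤ => ∫ x, fourier n x ∂m) cofinite (𝓝 0) := by
  set w : AddCircle T → ℝ := fun x => (m.rnDeriv haarAddCircle x).toReal with hw
  have hint : ∀ n : ℤ, ∫ x, fourier n x ∂m = fourierCoeff (fun x => (w x : ℂ)) (-n) := by
    intro n
    rw [← integral_rnDeriv_smul hm (f := fun x => fourier n x), fourierCoeff]
    congr 1; ext x
    rw [neg_neg, real_smul, smul_eq_mul, mul_comm]
  have hmeas : Measurable w := (Measure.measurable_rnDeriv m haarAddCircle).ennreal_toReal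
  have hw0 : 0 ≤ w := fun x => ENNReal.toReal_nonneg
  have hwint : Integrable w haarAddCircle := Measure.integrable_toReal_rnDeriv
  have hneg : Tendsto (fun n : ℤ => -n) cofinite cofinite :=
    Function.Injective.tendsto_cofinite neg_injective
  have h1 := (tendsto_fourierCoeff_of_integrable hmeas hwint hw0).comp hneg
  simp only [Function.comp_def] at h1
  exact Tendsto.congr (fun n => (hint n).symm) h1

lemma fourier_nsmul_apply (n : ℤ) (ν : ℕ) (x : AddCircle T) :
    fourier n (ν • x) = fourier (n * ν) x := by
  induction x using QuotientAddGroup.induction_on with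
  | H θ =>
    rw [← QuotientAddGroup.mk_nsmul, nsmul_eq_mul, fourier_coe_apply, fourier_coe_apply]
    congr 1
    push_cast
    ring

lemma integrable_comp_nsmul (m : Measure (AddCircle T)) [IsFiniteMeasure m]
    (g : C(AddCircle T, ℂ)) (ν : ℕ) :
    Integrable (fun x => g (ν • x)) m := by
  have hc : Continuous fun x : AddCircle T => g (ν • x) :=
    (map_continuous g).comp (continuous_nsmul ν)
  refine memLp_one_iff_integrable.mp (MemLp.of_bound hc.aestronglyMeasurable ‖g‖ ?_)
  filter_upwards with x
  exact ContinuousMap.norm_coe_le_norm g (ν • x)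

end StmtAux

namespace StmtAux
open AddCircle

variable {T : ℝ} [hT : Fact (0 < T)]

lemma integrable_cm (m : Measure (AddCircle T)) [IsFiniteMeasure m] (g : C(AddCircle T, ℂ)) :
    Integrable g m := by
  refine memLp_one_iff_integrable.mp
    (MemLp.of_bound (map_continuous g).aestronglyMeasurable ‖g‖ ?_)
  filter_upwards with x
  exact ContinuousMap.norm_coe_le_norm g x

lemma tendsto_trig (m : Measure (AddCircle T)) [IsFiniteMeasure m] (hm : m ≪ haarAddCircle) :
    ∀ P ∈ Submodule.span ℂ (Set.range (@fourier T)),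
      Tendsto (fun ν : ℕ => ∫ x, P (ν • x) ∂m) atTop
        (𝓝 ((m univ).toReal • ∫ x, P x ∂haarAddCircle)) := by
  intro P hP
  induction hP using Submodule.span_induction with
  | mem P hPr =>
    obtain ⟨n, rfl⟩ := hPr
    rcases eq_or_ne n 0 with rfl | hn
    · simp only [fourier_zero, integral_const, probReal_univ, ENNReal.toReal_one, one_smul]
      exact tendsto_const_nhds
    · have hinj : Function.Injective (fun ν : ℕ => n * (ν : ℤ)) := fun a b hab => by
        exact_mod_cast mul_left_cancel₀ hn hab
      have h2 := (tendsto_integral_fourier hm).comp (hinj.tendsto_cofinite)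
      rw [Nat.cofinite_eq_atTop] at h2
      rw [integral_fourier_eq_zero hn, smul_zero]
      refine Tendsto.congr (fun ν => ?_) h2
      simp only [Function.comp]
      exact integral_congr_ae (Eventually.of_forall fun x => (fourier_nsmul_apply n ν x).symm)
  | zero => simp only [ContinuousMap.zero_apply, integral_zero, smul_zero]; exact tendsto_const_nhds
  | add P Q hPm hQm ihP ihQ =>
    simp only [ContinuousMap.add_apply]
    have heq : ∀ ν : ℕ, ∫ x, (P (ν • x) + Q (ν • x)) ∂m
        = (∫ x, P (ν • x) ∂m) + ∫ x, Q (ν • x) ∂m :=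
      fun ν => integral_add (integrable_comp_nsmul m P ν) (integrable_comp_nsmul m Q ν)
    rw [integral_add (integrable_cm _ P) (integrable_cm _ Q), smul_add]
    exact Tendsto.congr (fun ν => (heq ν).symm) (ihP.add ihQ)
  | smul a P hPm ih =>
    simp only [ContinuousMap.smul_apply, integral_smul]
    rw [smul_comm]
    exact ih.const_smul a

lemma key (m : Measure (AddCircle T)) [IsFiniteMeasure m] (hm : m ≪ haarAddCircle)
    (g : C(AddCircle T, ℂ)) :
    Tendsto (fun ν : ℕ => ∫ x, g (ν • x) ∂m) atTop
      (𝓝 ((m univ).toReal • ∫ x, g x ∂haarAddCircle)) := by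
  rw [Metric.tendsto_nhds]
  intro ε hε
  set c := (m univ).toReal with hc
  have hc0 : 0 ≤ c := ENNReal.toReal_nonneg
  set δ := ε / (2 * c + 2) with hδdef
  have hδ : 0 < δ := by positivity
  have hgmem : g ∈ closure ((Submodule.span ℂ (Set.range (@fourier T)) : Submodule ℂ _) : Set _) := by
    have := span_fourier_closure_eq_top (T := T)
    rw [← Submodule.topologicalClosure_coe, this]
    trivial
  obtain ⟨P, hPmem, hPdist⟩ := Metric.mem_closure_iff.mp hgmem δ hδ
  have hbound : ∀ x, ‖g x - P x‖ ≤ δ := fun x => by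
    rw [← dist_eq_norm]
    exact (ContinuousMap.dist_apply_le_dist x).trans hPdist.le
  have hmid := (tendsto_trig m hm P hPmem).eventually
    (Metric.ball_mem_nhds _ hδ)
  filter_upwards [hmid] with ν hν
  have h1 : ‖(∫ x, g (ν • x) ∂m) - ∫ x, P (ν • x) ∂m‖ ≤ δ * c := by
    rw [← integral_sub (integrable_comp_nsmul m g ν) (integrable_comp_nsmul m P ν)]
    calc ‖∫ x, (g (ν • x) - P (ν • x)) ∂m‖ ≤ δ * (m univ).toReal :=
          norm_integral_le_of_norm_le_const (Eventually.of_forall fun x => hbound (ν • x))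
      _ = δ * c := rfl
  have hnorml : ‖∫ x, (P x - g x) ∂(haarAddCircle : Measure (AddCircle T))‖ ≤ δ := by
    have h := norm_integral_le_of_norm_le_const (μ := (haarAddCircle : Measure (AddCircle T)))
      (f := fun x => P x - g x) (C := δ)
      (Eventually.of_forall fun x => by rw [norm_sub_rev]; exact hbound x)
    simpa using h
  have h2 : ‖(c • ∫ x, P x ∂haarAddCircle) - c • ∫ x, g x ∂haarAddCircle‖ ≤ c * δ := by
    rw [← smul_sub, ← integral_sub (integrable_cm _ P) (integrable_cm _ g),
      norm_smul, Real.norm_eq_abs, _root_.abs_of_nonneg hc0]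
    exact mul_le_mul_of_nonneg_left hnorml hc0
  have htri := dist_triangle4 (∫ x, g (ν • x) ∂m) (∫ x, P (ν • x) ∂m)
    (c • ∫ x, P x ∂haarAddCircle) (c • ∫ x, g x ∂haarAddCircle)
  rw [dist_eq_norm (∫ x, g (ν • x) ∂m) (∫ x, P (ν • x) ∂m),
    dist_eq_norm (c • ∫ x, P x ∂haarAddCircle) (c • ∫ x, g x ∂haarAddCircle)] at htri
  have hεeq : δ * (2 * c + 2) = ε := by
    rw [hδdef]
    field_simp
  have hmain : dist (∫ x, g (ν • x) ∂m) (c • ∫ x, g x ∂haarAddCircle)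
      < δ * c + δ + c * δ :=
    lt_of_le_of_lt htri (add_lt_add_of_lt_of_le (add_lt_add_of_le_of_lt h1 hν) h2)
  have : δ * c + δ + c * δ < ε := by nlinarith
  exact hmain.trans this

end StmtAux

/-- Normalized arclength (Haar) measure on the unit circle `𝕋 ⊂ ℂ`. -/
noncomputable def sigmaT : Measure ℂ :=
  (ENNReal.ofReal (2 * Real.pi))⁻¹ •
    Measure.map (fun θ : ℝ => Complex.exp (θ * Complex.I))
      (volume.restrict (Set.Ico (0 : ℝ) (2 * Real.pi)))

/-- If `μ` is a finite Borel measure on the unit circle absolutely continuous with respect to the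
normalized arclength measure `σ`, then the pushforwards of `μ` under the power maps `ζ ↦ ζ^ν`
converge weakly to `μ(𝕋) • σ`. -/
theorem stmt_0 (μ : Measure ℂ) [IsFiniteMeasure μ] (hμ : μ ≪ sigmaT) :
    ∀ f : ℂ → ℂ, Continuous f →
      Tendsto (fun ν : ℕ => ∫ z, f z ∂(μ.map (fun ζ : ℂ => ζ ^ ν))) atTop
        (𝓝 ((μ (sphere (0 : ℂ) 1)).toReal • ∫ z, f z ∂sigmaT)) := by
  intro f hf
  haveI hT : Fact (0 < 2 * Real.pi) := ⟨by positivity⟩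
  set E : AddCircle (2 * Real.pi) → ℂ := fun x => (AddCircle.toCircle x : ℂ) with hE
  have hE_cont : Continuous E := continuous_subtype_val.comp AddCircle.continuous_toCircle
  have hE_inj : Function.Injective E :=
    Circle.coe_injective.comp (AddCircle.injective_toCircle (by positivity : (0:ℝ) < 2 * Real.pi).ne')
  have mE : MeasurableEmbedding E := (hE_cont.isClosedEmbedding hE_inj).measurableEmbedding
  have E_mk : ∀ θ : ℝ, E (θ : AddCircle (2 * Real.pi)) = Complex.exp (θ * Complex.I) := by
    intro θ
    have hpi : (2 * Real.pi) / (2 * Real.pi) = 1 := div_self (by positivity)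
    rw [hE]
    simp only [AddCircle.toCircle_apply_mk, Circle.coe_exp, hpi, one_mul]
  have hrange : Set.range E = sphere (0 : ℂ) 1 := by
    ext z
    constructor
    · rintro ⟨x, rfl⟩
      exact (AddCircle.toCircle x).2
    · intro hz
      refine ⟨((Complex.arg z : ℝ) : AddCircle (2 * Real.pi)), ?_⟩
      have h1 : AddCircle.toCircle ((Complex.arg z : ℝ) : AddCircle (2 * Real.pi))
          = Circle.exp (Complex.arg z) := by
        rw [AddCircle.toCircle_apply_mk]
        congr 1
        field_simp
      rw [hE]
      simp only [h1]
      have := Circle.exp_arg (⟨z, hz⟩ : Circle)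
      rw [this]
  have hσ : sigmaT = Measure.map E AddCircle.haarAddCircle := by
    have hvol : Measure.map E (volume : Measure (AddCircle (2 * Real.pi)))
        = Measure.map (fun θ : ℝ => Complex.exp (θ * Complex.I))
            (volume.restrict (Set.Ico (0 : ℝ) (2 * Real.pi))) := by
      rw [← (AddCircle.measurePreserving_mk (2 * Real.pi) 0).map_eq,
        Measure.map_map hE_cont.measurable AddCircle.measurable_mk', zero_add]
      have h3 : volume.restrict (Set.Ioc (0:ℝ) (2 * Real.pi))
          = volume.restrict (Set.Ico (0:ℝ) (2 * Real.pi)) :=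
        (Measure.restrict_congr_set Ico_ae_eq_Ioc).symm
      rw [h3]
      congr 1
      funext θ
      exact E_mk θ
    calc sigmaT
        = (ENNReal.ofReal (2 * Real.pi))⁻¹ •
            Measure.map (fun θ : ℝ => Complex.exp (θ * Complex.I))
              (volume.restrict (Set.Ico (0 : ℝ) (2 * Real.pi))) := rfl
      _ = (ENNReal.ofReal (2 * Real.pi))⁻¹ • Measure.map E volume := by rw [hvol]
      _ = Measure.map E ((ENNReal.ofReal (2 * Real.pi))⁻¹ • volume) := by
            rw [Measure.map_smul]
      _ = Measure.map E AddCircle.haarAddCircle := by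
            rw [AddCircle.volume_eq_smul_haarAddCircle, smul_smul,
              ENNReal.inv_mul_cancel (ENNReal.ofReal_pos.mpr (by positivity)).ne'
                ENNReal.ofReal_ne_top, one_smul]
  have hEsphere : ∀ x, E x ∈ sphere (0:ℂ) 1 := by
    intro x; rw [← hrange]; exact ⟨x, rfl⟩
  have hsphere_null : μ (sphere (0:ℂ) 1)ᶜ = 0 := by
    apply hμ
    rw [hσ, Measure.map_apply hE_cont.measurable (isClosed_sphere.measurableSet.compl)]
    have h4 : E ⁻¹' (sphere (0:ℂ) 1)ᶜ = ∅ := by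
      ext x
      simp only [Set.mem_preimage, Set.mem_compl_iff, Set.mem_empty_iff_false, iff_false, not_not]
      exact hEsphere x
    rw [h4, measure_empty]
  set μ' : Measure (AddCircle (2 * Real.pi)) := Measure.comap E μ with hμ'
  haveI : IsFiniteMeasure μ' := ⟨by rw [hμ', mE.comap_apply]; exact measure_lt_top μ _⟩
  have hmap : Measure.map E μ' = μ := by
    rw [hμ', mE.map_comap, hrange]
    exact Measure.restrict_eq_self_of_ae_mem (mem_ae_iff.mpr hsphere_null)
  have hac : μ' ≪ AddCircle.haarAddCircle := by
    refine Measure.AbsolutelyContinuous.mk fun s hs h0 => ?_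
    rw [hμ', mE.comap_apply]
    apply hμ
    rw [hσ, Measure.map_apply hE_cont.measurable (mE.measurableSet_image' hs),
      Set.preimage_image_eq s hE_inj]
    exact h0
  set g : C(AddCircle (2 * Real.pi), ℂ) := ⟨fun x => f (E x), hf.comp hE_cont⟩ with hg
  have hEpow : ∀ (ν : ℕ) (x : AddCircle (2 * Real.pi)), E x ^ ν = E (ν • x) := by
    intro ν x
    induction x using QuotientAddGroup.induction_on with
    | H θ =>
      rw [← QuotientAddGroup.mk_nsmul, nsmul_eq_mul, E_mk θ, E_mk, ← Complex.exp_nat_mul]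
      congr 1
      push_cast
      ring
  have hpow : ∀ ν : ℕ, μ.map (fun ζ : ℂ => ζ ^ ν)
      = Measure.map E (Measure.map (fun x => ν • x) μ') := by
    intro ν
    conv_lhs => rw [← hmap]
    rw [Measure.map_map (show Measurable fun ζ : ℂ => ζ ^ ν from measurable_id.pow_const ν)
        mE.measurable,
      Measure.map_map mE.measurable (continuous_nsmul ν).measurable]
    congr 1
    funext x
    exact hEpow ν x
  have hI1 : ∀ ν : ℕ, ∫ z, f z ∂(μ.map (fun ζ : ℂ => ζ ^ ν)) = ∫ x, g (ν • x) ∂μ' := by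
    intro ν
    rw [hpow ν, mE.integral_map,
      integral_map ((continuous_nsmul ν).measurable.aemeasurable)
        (show AEStronglyMeasurable (fun x => f (E x)) (Measure.map (fun x => ν • x) μ') from
          (hf.comp hE_cont).aestronglyMeasurable)]
    rfl
  have hI2 : ∫ z, f z ∂sigmaT = ∫ x, g x ∂AddCircle.haarAddCircle := by
    rw [hσ, mE.integral_map]
    rfl
  have hμsphere : μ (sphere (0:ℂ) 1) = μ' Set.univ := by
    rw [hμ', mE.comap_apply, Set.image_univ, hrange]
  rw [show (μ (sphere (0:ℂ) 1)).toReal • ∫ z, f z ∂sigmaT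
      = (μ' Set.univ).toReal • ∫ x, g x ∂AddCircle.haarAddCircle from by rw [hμsphere, hI2]]
  exact Tendsto.congr (fun ν => (hI1 ν).symm) (StmtAux.key μ' hac g)
end

section
/- Let I ⊂ 𝕋 be a nonempty open subset of the unit circle with σ(closure(I)) < 1, and let K = ((𝕋 \ I) × {0}) ∪ (closure(I) × 𝕋) ⊂ ℂ². Then the polynomially convex hull of K equals (closed unit disc × {0}) ∪ (closure(I) × closed unit disc). -/
open Complex MeasureTheory Metric Set Filter Topology

/-- The polynomially convex hull of a set `K ⊆ ℂ²`: all points `z` such that every bound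
`|P| ≤ C` valid on `K` for a polynomial `P ∈ ℂ[z₁,z₂]` also holds at `z`. -/
def polyHull2 (K : Set (ℂ × ℂ)) : Set (ℂ × ℂ) :=
  {z | ∀ P : MvPolynomial (Fin 2) ℂ, ∀ C : ℝ,
    (∀ w ∈ K, ‖MvPolynomial.eval ![w.1, w.2] P‖ ≤ C) → ‖MvPolynomial.eval ![z.1, z.2] P‖ ≤ C}

lemma diff_eval2 (P : MvPolynomial (Fin 2) ℂ) (a b : ℂ → ℂ)
    (ha : Differentiable ℂ a) (hb : Differentiable ℂ b) :
    Differentiable ℂ (fun ζ => MvPolynomial.eval ![a ζ, b ζ] P) := by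
  induction P using MvPolynomial.induction_on with
  | C c => simpa using differentiable_const c
  | add p q hp hq => simp only [map_add]; exact hp.add hq
  | mul_X p i hp =>
      simp only [map_mul, MvPolynomial.eval_X]
      refine hp.mul ?_
      fin_cases i
      · simpa using ha
      · simpa using hb

lemma eval_aeval (q : Polynomial ℂ) (v : Fin 2 → ℂ) :
    MvPolynomial.eval v (Polynomial.aeval (MvPolynomial.X 0 : MvPolynomial (Fin 2) ℂ) q)
      = q.eval (v 0) := by
  induction q using Polynomial.induction_on' with
  | add p r hp hr => simp [hp, hr]
  | monomial n c => simp [Polynomial.aeval_monomial, MvPolynomial.algebraMap_eq]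


def ApproxOn (E : Set ℂ) (f : ℂ → ℂ) : Prop :=
  ∀ ε : ℝ, 0 < ε → ∃ q : Polynomial ℂ, ∀ ζ ∈ E, ‖f ζ - q.eval ζ‖ ≤ ε

variable {E : Set ℂ} {f g : ℂ → ℂ}

lemma ApproxOn.poly (q : Polynomial ℂ) : ApproxOn E (fun ζ => q.eval ζ) :=
  fun ε hε => ⟨q, fun ζ _ => by simpa using hε.le⟩

lemma ApproxOn.of_close
    (h : ∀ δ : ℝ, 0 < δ → ∃ g : ℂ → ℂ, ApproxOn E g ∧ ∀ ζ ∈ E, ‖f ζ - g ζ‖ ≤ δ) :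
    ApproxOn E f := by
  intro ε hε
  obtain ⟨g, hg, hclose⟩ := h (ε / 2) (by positivity)
  obtain ⟨q, hq⟩ := hg (ε / 2) (by positivity)
  refine ⟨q, fun ζ hζ => ?_⟩
  calc ‖f ζ - q.eval ζ‖ ≤ ‖f ζ - g ζ‖ + ‖g ζ - q.eval ζ‖ := by
        simpa using norm_add_le (f ζ - g ζ) (g ζ - q.eval ζ)
    _ ≤ ε / 2 + ε / 2 := add_le_add (hclose ζ hζ) (hq ζ hζ)
    _ = ε := by ring

lemma ApproxOn.add (hf : ApproxOn E f) (hg : ApproxOn E g) :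
    ApproxOn E (fun ζ => f ζ + g ζ) := by
  intro ε hε
  obtain ⟨q, hq⟩ := hf (ε / 2) (by positivity)
  obtain ⟨r, hr⟩ := hg (ε / 2) (by positivity)
  refine ⟨q + r, fun ζ hζ => ?_⟩
  have h1 : f ζ + g ζ - (q + r).eval ζ = (f ζ - q.eval ζ) + (g ζ - r.eval ζ) := by
    simp; ring
  rw [h1]
  calc ‖(f ζ - q.eval ζ) + (g ζ - r.eval ζ)‖ ≤ ‖f ζ - q.eval ζ‖ + ‖g ζ - r.eval ζ‖ :=
        norm_add_le _ _
    _ ≤ ε / 2 + ε / 2 := add_le_add (hq ζ hζ) (hr ζ hζ)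
    _ = ε := by ring

lemma ApproxOn.const_mul (hf : ApproxOn E f) (c : ℂ) :
    ApproxOn E (fun ζ => c * f ζ) := by
  intro ε hε
  obtain ⟨q, hq⟩ := hf (ε / (‖c‖ + 1)) (by positivity)
  refine ⟨Polynomial.C c * q, fun ζ hζ => ?_⟩
  have h1 : c * f ζ - (Polynomial.C c * q).eval ζ = c * (f ζ - q.eval ζ) := by
    simp; ring
  rw [h1, norm_mul]
  calc ‖c‖ * ‖f ζ - q.eval ζ‖ ≤ ‖c‖ * (ε / (‖c‖ + 1)) := by
        gcongr; exact hq ζ hζ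
    _ ≤ (‖c‖ + 1) * (ε / (‖c‖ + 1)) := by gcongr; linarith [norm_nonneg c]
    _ = ε := by field_simp

lemma ApproxOn.mul (hf : ApproxOn E f) (hg : ApproxOn E g) (M : ℝ) (hM0 : 0 ≤ M)
    (hMf : ∀ ζ ∈ E, ‖f ζ‖ ≤ M) (hMg : ∀ ζ ∈ E, ‖g ζ‖ ≤ M) :
    ApproxOn E (fun ζ => f ζ * g ζ) := by
  intro ε hε
  set δ := min 1 (ε / (2 * M + 1)) with hδdef
  have hδ0 : 0 < δ := lt_min one_pos (by positivity)
  obtain ⟨q, hq⟩ := hf δ hδ0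
  obtain ⟨r, hr⟩ := hg δ hδ0
  refine ⟨q * r, fun ζ hζ => ?_⟩
  have key : f ζ * g ζ - (q * r).eval ζ
      = f ζ * (g ζ - r.eval ζ) + (f ζ - q.eval ζ) * r.eval ζ := by
    simp; ring
  have hδ1 : δ ≤ 1 := min_le_left _ _
  have hδ2 : δ ≤ ε / (2 * M + 1) := min_le_right _ _
  have hrb : ‖r.eval ζ‖ ≤ M + 1 := by
    have h1 : ‖r.eval ζ‖ ≤ ‖g ζ‖ + ‖g ζ - r.eval ζ‖ := by
      calc ‖r.eval ζ‖ = ‖g ζ - (g ζ - r.eval ζ)‖ := by ring_nf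
        _ ≤ ‖g ζ‖ + ‖g ζ - r.eval ζ‖ := norm_sub_le _ _
    linarith [hMg ζ hζ, hr ζ hζ]
  rw [key]
  have hbnd : ‖f ζ * (g ζ - r.eval ζ) + (f ζ - q.eval ζ) * r.eval ζ‖
      ≤ M * δ + δ * (M + 1) := by
    calc ‖f ζ * (g ζ - r.eval ζ) + (f ζ - q.eval ζ) * r.eval ζ‖
        ≤ ‖f ζ‖ * ‖g ζ - r.eval ζ‖ + ‖f ζ - q.eval ζ‖ * ‖r.eval ζ‖ := by
          refine (norm_add_le _ _).trans ?_
          simp [norm_mul]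
      _ ≤ M * δ + δ * (M + 1) := by
          gcongr
          · exact hMf ζ hζ
          · exact hr ζ hζ
          · exact hq ζ hζ
  refine hbnd.trans ?_
  have : M * δ + δ * (M + 1) = (2 * M + 1) * δ := by ring
  rw [this]
  calc (2 * M + 1) * δ ≤ (2 * M + 1) * (ε / (2 * M + 1)) := by gcongr
    _ = ε := by field_simp

lemma ApproxOn.pow (hf : ApproxOn E f) (M : ℝ) (hM : ∀ ζ ∈ E, ‖f ζ‖ ≤ M) (m : ℕ) :
    ApproxOn E (fun ζ => f ζ ^ m) := by
  set M' := max M 1 with hM'def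
  have hM' : ∀ ζ ∈ E, ‖f ζ‖ ≤ M' := fun ζ h => (hM ζ h).trans (le_max_left _ _)
  have h1 : (1 : ℝ) ≤ M' := le_max_right _ _
  have h0 : (0 : ℝ) ≤ M' := zero_le_one.trans h1
  induction m with
  | zero => simpa using ApproxOn.poly (1 : Polynomial ℂ)
  | succ n ih =>
      have hbn : ∀ ζ ∈ E, ‖f ζ ^ n‖ ≤ M' ^ (n + 1) := fun ζ h => by
        rw [norm_pow]
        calc ‖f ζ‖ ^ n ≤ M' ^ n := pow_le_pow_left₀ (norm_nonneg _) (hM' ζ h) n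
          _ ≤ M' ^ (n + 1) := pow_le_pow_right₀ h1 (Nat.le_succ n)
      have hbf : ∀ ζ ∈ E, ‖f ζ‖ ≤ M' ^ (n + 1) := fun ζ h =>
        (hM' ζ h).trans (le_self_pow₀ h1 (Nat.succ_ne_zero n))
      have := ih.mul hf (M' ^ (n + 1)) (by positivity) hbn hbf
      simpa [pow_succ] using this

lemma ApproxOn.finsum (F : ℕ → ℂ → ℂ) (n : ℕ) (h : ∀ k, ApproxOn E (F k)) :
    ApproxOn E (fun ζ => ∑ k ∈ Finset.range n, F k ζ) := by
  induction n with
  | zero => simpa using ApproxOn.poly (0 : Polynomial ℂ)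
  | succ n ih => simpa [Finset.sum_range_succ] using ih.add (h n)

lemma approx_push {E : Set ℂ} (a b : ℂ) (d : ℝ) (hd : 0 < d)
    (hdist : ∀ ζ ∈ E, d ≤ ‖ζ - a‖)
    (ha : ApproxOn E (fun ζ => (ζ - a)⁻¹))
    (hb : ‖b - a‖ ≤ d / 2) :
    ApproxOn E (fun ζ => (ζ - b)⁻¹) := by
  apply ApproxOn.of_close
  intro δ hδ
  obtain ⟨n, hn⟩ : ∃ n : ℕ, (1 / 2 : ℝ) ^ n < δ * d / 2 :=
    exists_pow_lt_of_lt_one (by positivity) (by norm_num)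
  refine ⟨fun ζ => ∑ k ∈ Finset.range n, (b - a) ^ k * ((ζ - a)⁻¹) ^ (k + 1), ?_, ?_⟩
  · refine ApproxOn.finsum _ n (fun k => ?_)
    exact (ha.pow d⁻¹ (fun ζ hζ => by
      rw [norm_inv]
      exact inv_anti₀ hd (hdist ζ hζ)) (k + 1)).const_mul _
  · intro ζ hζ
    have hζa : ‖ζ - a‖ ≥ d := hdist ζ hζ
    have hζa0 : ζ - a ≠ 0 := by
      intro h; rw [h, norm_zero] at hζa; linarith
    have hζb : ‖ζ - b‖ ≥ d / 2 := by
      have h3 : ‖ζ - a‖ ≤ ‖ζ - b‖ + ‖b - a‖ := by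
        have := norm_add_le (ζ - b) (b - a)
        have h2 : ζ - b + (b - a) = ζ - a := by ring
        rw [h2] at this; linarith
      linarith
    have hζb0 : ζ - b ≠ 0 := by
      intro h; rw [h, norm_zero] at hζb; linarith
    obtain ⟨r, hrdef⟩ : ∃ r : ℂ, r = (b - a) / (ζ - a) := ⟨_, rfl⟩
    have hrnorm : ‖r‖ ≤ 1 / 2 := by
      rw [hrdef, norm_div]
      rw [div_le_div_iff₀ (lt_of_lt_of_le hd hζa) (by norm_num)]
      linarith
    have hr1 : r ≠ 1 := by
      intro h
      rw [h] at hrnorm; norm_num at hrnorm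
    have hsum : (∑ k ∈ Finset.range n, (b - a) ^ k * ((ζ - a)⁻¹) ^ (k + 1))
        = (∑ k ∈ Finset.range n, r ^ k) * (ζ - a)⁻¹ := by
      rw [Finset.sum_mul]
      refine Finset.sum_congr rfl (fun k _ => ?_)
      rw [hrdef, div_eq_mul_inv, mul_pow, pow_succ']
      ring
    have hfact : ζ - b = (ζ - a) * (1 - r) := by
      rw [hrdef]; field_simp; ring
    have h1r : (1 : ℂ) - r ≠ 0 := by
      intro h; apply hr1; linear_combination -h
    have hone : (1 - r) * (ζ - b)⁻¹ = (ζ - a)⁻¹ := by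
      rw [hfact, mul_inv, mul_comm ((ζ - a)⁻¹) ((1 - r)⁻¹), ← mul_assoc,
        mul_inv_cancel₀ h1r, one_mul]
    have key : ∀ m : ℕ, (ζ - b)⁻¹ - (∑ k ∈ Finset.range m, r ^ k) * (ζ - a)⁻¹
        = r ^ m * (ζ - b)⁻¹ := by
      intro m
      induction m with
      | zero => simp
      | succ m ih =>
          rw [Finset.sum_range_succ, add_mul, ← sub_sub, ih, ← hone]
          ring
    beta_reduce
    rw [hsum, key n, norm_mul, norm_pow, norm_inv]
    calc ‖r‖ ^ n * ‖ζ - b‖⁻¹ ≤ (1 / 2) ^ n * (d / 2)⁻¹ := by gcongr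
      _ ≤ δ := by
          rw [inv_div]
          calc (1 / 2 : ℝ) ^ n * (2 / d) ≤ (δ * d / 2) * (2 / d) := by gcongr
            _ = δ := by field_simp

lemma approx_far {E : Set ℂ} (hE : ∀ ζ ∈ E, ‖ζ‖ ≤ 1) (a : ℂ) (ha : 2 ≤ ‖a‖) :
    ApproxOn E (fun ζ => (ζ - a)⁻¹) := by
  have ha0 : a ≠ 0 := by
    intro h; rw [h, norm_zero] at ha; linarith
  apply ApproxOn.of_close
  intro δ hδ
  obtain ⟨n, hn⟩ : ∃ n : ℕ, (1 / 2 : ℝ) ^ n < δ :=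
    exists_pow_lt_of_lt_one hδ (by norm_num)
  refine ⟨fun ζ => ∑ k ∈ Finset.range n, (-(a⁻¹ ^ (k + 1))) * ζ ^ k, ?_, ?_⟩
  · refine ApproxOn.finsum _ n (fun k => ?_)
    have hk : ApproxOn E (fun ζ : ℂ => ζ ^ k) := by
      have heq : (fun ζ : ℂ => Polynomial.eval ζ (Polynomial.X ^ k : Polynomial ℂ))
          = fun ζ : ℂ => ζ ^ k := by
        funext ζ; simp
      exact heq ▸ ApproxOn.poly (Polynomial.X ^ k : Polynomial ℂ)
    exact hk.const_mul _
  · intro ζ hζ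
    have hζ1 : ‖ζ‖ ≤ 1 := hE ζ hζ
    have hζa : ‖ζ - a‖ ≥ 1 := by
      have h3 : ‖a‖ ≤ ‖ζ - a‖ + ‖ζ‖ := by
        have := norm_add_le (a - ζ) ζ
        have h2 : a - ζ + ζ = a := by ring
        rw [h2] at this
        have h4 : ‖a - ζ‖ = ‖ζ - a‖ := norm_sub_rev _ _
        linarith
      linarith
    have hζa0 : ζ - a ≠ 0 := by
      intro h; rw [h, norm_zero] at hζa; linarith
    obtain ⟨r, hrdef⟩ : ∃ r : ℂ, r = ζ / a := ⟨_, rfl⟩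
    have hrnorm : ‖r‖ ≤ 1 / 2 := by
      rw [hrdef, norm_div, div_le_div_iff₀ (by linarith : (0:ℝ) < ‖a‖) (by norm_num)]
      linarith
    have hr1 : r ≠ 1 := by
      intro h; rw [h] at hrnorm; norm_num at hrnorm
    have hr1' : r - 1 ≠ 0 := sub_ne_zero.mpr hr1
    have hfact : ζ - a = a * (r - 1) := by
      rw [hrdef]; field_simp
    have hone : (r - 1) * (ζ - a)⁻¹ = a⁻¹ := by
      rw [hfact, mul_inv, mul_comm (a⁻¹) ((r - 1)⁻¹), ← mul_assoc,
        mul_inv_cancel₀ hr1', one_mul]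
    have hterm : ∀ k : ℕ, (-(a⁻¹ ^ (k + 1))) * ζ ^ k = -(r ^ k * a⁻¹) := by
      intro k
      rw [hrdef, div_pow, pow_succ]
      field_simp
      rw [one_div, inv_pow, mul_right_comm, inv_mul_cancel₀ (pow_ne_zero k ha0), one_mul]
    have key : ∀ m : ℕ,
        (ζ - a)⁻¹ - (∑ k ∈ Finset.range m, (-(a⁻¹ ^ (k + 1))) * ζ ^ k)
          = r ^ m * (ζ - a)⁻¹ := by
      intro m
      induction m with
      | zero => simp
      | succ m ih =>
          rw [Finset.sum_range_succ, hterm m]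
          simp only [sub_add_eq_sub_sub, sub_neg_eq_add]
          rw [ih, ← hone]
          ring
    beta_reduce
    rw [key n, norm_mul, norm_pow, norm_inv]
    have h5 : ‖ζ - a‖⁻¹ ≤ 1 := by
      rw [inv_le_one_iff₀]; right; exact hζa
    calc ‖r‖ ^ n * ‖ζ - a‖⁻¹ ≤ (1 / 2) ^ n * 1 := by gcongr
      _ ≤ δ := by rw [mul_one]; exact hn.le

lemma sep (E : Set ℂ) (hEs : E ⊆ sphere (0 : ℂ) 1) (hcl : IsClosed E) (hEne : E.Nonempty)
    (p : ℂ) (hp : p ∈ sphere (0 : ℂ) 1) (hpE : p ∉ E)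
    (z : ℂ) (hz : ‖z‖ ≤ 1) (hzE : z ∉ E) :
    ApproxOn E (fun ζ => (ζ - z)⁻¹) := by
  have hnorm1 : ∀ ζ ∈ E, ‖ζ‖ = 1 := fun ζ h => by
    simpa using mem_sphere_zero_iff_norm.1 (hEs h)
  have hnormle : ∀ ζ ∈ E, ‖ζ‖ ≤ 1 := fun ζ h => (hnorm1 ζ h).le
  have hpn : ‖p‖ = 1 := by simpa using mem_sphere_zero_iff_norm.1 hp
  have dpos : ∀ x : ℂ, x ∉ E → 0 < infDist x E := fun x hx =>
    (hcl.notMem_iff_infDist_pos hEne).1 hx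
  have dle : ∀ x : ℂ, ∀ ζ ∈ E, infDist x E ≤ ‖ζ - x‖ := fun x ζ hζ => by
    rw [norm_sub_rev]
    simpa [dist_eq_norm] using infDist_le_dist_of_mem (s := E) (x := x) hζ
  set G : Set ℂ := {a | a ∉ E ∧ ApproxOn E (fun ζ => (ζ - a)⁻¹)} with hGdef
  have pushstep : ∀ a ∈ G, ∀ x : ℂ, x ∉ E → ‖x - a‖ ≤ infDist a E / 2 → x ∈ G := by
    rintro a ⟨haE, haA⟩ x hxE hx
    exact ⟨hxE, approx_push a x (infDist a E) (dpos a haE) (fun ζ hζ => dle a ζ hζ) haA hx⟩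
  set A : Set ℂ := ⋃ a ∈ G, ball a (infDist a E / 3) with hAdef
  set B : Set ℂ := ⋃ b ∈ {b : ℂ | b ∉ E ∧ b ∉ G}, ball b (infDist b E / 3) with hBdef
  have hAopen : IsOpen A := isOpen_biUnion fun _ _ => isOpen_ball
  have hBopen : IsOpen B := isOpen_biUnion fun _ _ => isOpen_ball
  have hAG : ∀ x ∈ A, x ∉ E → x ∈ G := by
    intro x hxA hxE
    obtain ⟨a, haG, hxball⟩ := mem_iUnion₂.1 hxA
    have hda : 0 < infDist a E := dpos a haG.1
    refine pushstep a haG x hxE ?_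
    have : dist x a < infDist a E / 3 := mem_ball.1 hxball
    rw [← dist_eq_norm]
    linarith
  have hBG : ∀ x ∈ B, x ∉ E → x ∉ G := by
    intro x hxB hxE hxG
    obtain ⟨b, hbG, hxball⟩ := mem_iUnion₂.1 hxB
    have hdb : 0 < infDist b E := dpos b hbG.1
    have hdist : dist x b < infDist b E / 3 := mem_ball.1 hxball
    have hdx : infDist b E ≤ infDist x E + dist b x := infDist_le_infDist_add_dist
    have : ‖b - x‖ ≤ infDist x E / 2 := by
      rw [← dist_eq_norm]
      rw [dist_comm] at hdist
      linarith
    exact hbG.2 (pushstep x hxG b hbG.1 this)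
  -- far point
  have h3p : (3 : ℂ) * p ∈ G := by
    constructor
    · intro h
      have := hnorm1 _ h
      rw [norm_mul, hpn] at this
      norm_num at this
    · refine approx_far hnormle _ ?_
      rw [norm_mul, hpn]
      norm_num
  -- the connected set W
  set dz := infDist z E with hdz
  have hdz0 : 0 < dz := dpos z hzE
  set W : Set ℂ := (ball (0 : ℂ) 1 ∪ ball z dz) ∪ segment ℝ (0 : ℂ) (3 * p) with hWdef
  have hWpre : IsPreconnected W := by
    have hpc1 : IsPreconnected (ball (0 : ℂ) 1 ∪ ball z dz) := by
      set m := min dz 1 with hm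
      have hm0 : 0 < m := lt_min hdz0 one_pos
      have hm1 : m ≤ 1 := min_le_right _ _
      have hmd : m ≤ dz := min_le_left _ _
      refine IsPreconnected.union ((1 - m / 2) • z) ?_ ?_
        (convex_ball _ _).isPreconnected (convex_ball _ _).isPreconnected
      · rw [mem_ball_zero_iff, norm_smul]
        have h1 : ‖(1 - m / 2 : ℝ)‖ = 1 - m / 2 := by
          rw [Real.norm_eq_abs, _root_.abs_of_nonneg]; linarith
        rw [h1]
        calc (1 - m / 2) * ‖z‖ ≤ (1 - m / 2) * 1 := by
              apply mul_le_mul_of_nonneg_left hz; linarith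
          _ < 1 := by linarith
      · rw [mem_ball, dist_eq_norm]
        have h2 : (1 - m / 2 : ℝ) • z - z = (-(m / 2) : ℝ) • z := by
          calc (1 - m / 2 : ℝ) • z - z = (1 - m / 2 : ℝ) • z - (1 : ℝ) • z := by
                rw [one_smul]
            _ = ((1 - m / 2) - 1 : ℝ) • z := (sub_smul _ _ _).symm
            _ = (-(m / 2) : ℝ) • z := by norm_num
        rw [h2, norm_smul, Real.norm_eq_abs, abs_neg,
          _root_.abs_of_nonneg (by linarith : (0:ℝ) ≤ m / 2)]
        calc m / 2 * ‖z‖ ≤ m / 2 * 1 := by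
              apply mul_le_mul_of_nonneg_left hz; linarith
          _ < dz := by linarith
    refine IsPreconnected.union 0 ?_ ?_ hpc1 (convex_segment _ _).isPreconnected
    · exact Or.inl (mem_ball_self one_pos)
    · exact left_mem_segment ℝ _ _
  have hWE : W ⊆ Eᶜ := by
    rintro x (hx | hx)
    · rcases hx with hx | hx
      · intro hxE
        rw [mem_ball_zero_iff] at hx
        rw [hnorm1 x hxE] at hx
        norm_num at hx
      · intro hxE
        have := dle z x hxE
        rw [mem_ball, dist_eq_norm] at hx
        linarith
    · intro hxE
      obtain ⟨u, v, hu, hv, huv, hx⟩ := hx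
      have hxv : x = v • (3 * p) := by rw [← hx]; simp
      have hnx : ‖x‖ = 3 * v := by
        rw [hxv, norm_smul, norm_mul, hpn, mul_one, Real.norm_eq_abs,
          _root_.abs_of_nonneg hv]
        have h3n : ‖(3 : ℂ)‖ = 3 := by norm_num
        rw [h3n]; ring
      have h1 : (3 : ℝ) * v = 1 := by rw [← hnx]; exact hnorm1 x hxE
      have hv3 : v = 1 / 3 := by linarith
      have : x = p := by
        rw [hxv, hv3]
        rw [show ((1 / 3 : ℝ) • (3 * p)) = p by
          rw [real_smul]; push_cast; ring]
      exact hpE (this ▸ hxE)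
  -- apply preconnectedness
  by_contra hzG
  have hz3W : (3 : ℂ) * p ∈ W := Or.inr (right_mem_segment ℝ _ _)
  have hzW : z ∈ W := by
    left; right; exact mem_ball_self hdz0
  have hcover : W ⊆ A ∪ B := by
    intro x hxW
    have hxE : x ∉ E := hWE hxW
    by_cases hxG : x ∈ G
    · left
      exact mem_biUnion hxG (mem_ball_self (by linarith [dpos x hxE]))
    · right
      exact mem_biUnion ⟨hxE, hxG⟩ (mem_ball_self (by linarith [dpos x hxE]))
  have hWA : (W ∩ A).Nonempty := by
    refine ⟨3 * p, hz3W, ?_⟩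
    exact mem_biUnion h3p (mem_ball_self (by linarith [dpos _ h3p.1]))
  have hWB : (W ∩ B).Nonempty := by
    refine ⟨z, hzW, ?_⟩
    refine mem_biUnion ⟨hzE, fun h => hzG h.2⟩ (mem_ball_self (by linarith))
  obtain ⟨x, hxW, hxA, hxB⟩ := hWpre A B hAopen hBopen hcover hWA hWB
  exact hBG x hxB (hWE hxW) (hAG x hxA (hWE hxW))

lemma sigmaT_sphere : sigmaT (sphere (0 : ℂ) 1) = 1 := by
  have hmeas : Measurable fun θ : ℝ => Complex.exp (θ * Complex.I) :=
    (Complex.continuous_exp.comp ((Complex.continuous_ofReal).mul continuous_const)).measurable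
  have hpre : (fun θ : ℝ => Complex.exp (θ * Complex.I)) ⁻¹' sphere (0 : ℂ) 1 = univ := by
    ext θ
    simp only [mem_preimage, mem_sphere_zero_iff_norm, mem_univ, iff_true]
    rw [Complex.norm_exp_ofReal_mul_I]
  rw [sigmaT, Measure.smul_apply, Measure.map_apply hmeas (isClosed_sphere.measurableSet), hpre,
    Measure.restrict_apply MeasurableSet.univ, univ_inter, Real.volume_Ico, smul_eq_mul]
  rw [sub_zero, ENNReal.inv_mul_cancel]
  · simp [Real.pi_pos]
  · exact ENNReal.ofReal_ne_top


/-- For a nonempty relatively open subset `I` of the unit circle with `σ(closure I) < 1` and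
`K = ((𝕋 \ I) × {0}) ∪ (closure I × 𝕋)`, the polynomially convex hull of `K` equals
`(𝔻̄ × {0}) ∪ (closure I × 𝔻̄)`. -/
theorem stmt_2 (I : Set ℂ) (hI : I ⊆ sphere (0 : ℂ) 1) (hne : I.Nonempty)
    (hopen : ∃ U : Set ℂ, IsOpen U ∧ I = U ∩ sphere (0 : ℂ) 1)
    (hσ : sigmaT (closure I) < 1) :
    polyHull2 (((sphere (0 : ℂ) 1 \ I) ×ˢ ({0} : Set ℂ)) ∪ (closure I ×ˢ sphere (0 : ℂ) 1)) =
      (closedBall (0 : ℂ) 1 ×ˢ ({0} : Set ℂ)) ∪ (closure I ×ˢ closedBall (0 : ℂ) 1) := by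
  have hEs : closure I ⊆ sphere (0 : ℂ) 1 := closure_minimal hI isClosed_sphere
  have hEcl : IsClosed (closure I) := isClosed_closure
  have hEne : (closure I).Nonempty := hne.closure
  obtain ⟨p, hp, hpE⟩ : ∃ p ∈ sphere (0 : ℂ) 1, p ∉ closure I := by
    by_contra h
    push_neg at h
    have hEeq : closure I = sphere (0 : ℂ) 1 := Subset.antisymm hEs h
    rw [hEeq, sigmaT_sphere] at hσ
    exact lt_irrefl _ hσ
  have maxmod : ∀ (f : ℂ → ℂ) (C : ℝ), Differentiable ℂ f →
      (∀ t ∈ sphere (0 : ℂ) 1, ‖f t‖ ≤ C) → ∀ x ∈ closedBall (0 : ℂ) 1, ‖f x‖ ≤ C := by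
    intro f C hf hb x hx
    have h1 : frontier (ball (0 : ℂ) 1) = sphere 0 1 := frontier_ball 0 one_ne_zero
    have h2 : closure (ball (0 : ℂ) 1) = closedBall 0 1 := closure_ball 0 one_ne_zero
    exact Complex.norm_le_of_forall_mem_frontier_norm_le isBounded_ball
      hf.diffContOnCl (fun t ht => hb t (h1 ▸ ht)) (h2 ▸ hx)
  ext ⟨z, w⟩
  constructor
  · -- hull ⊆ RHS
    intro hzw
    have hz1 : ‖z‖ ≤ 1 := by
      have := hzw (MvPolynomial.X 0) 1 ?_
      · simpa using this
      · rintro ⟨x, y⟩ (⟨hx, hy⟩ | ⟨hx, hy⟩)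
        · simpa using (mem_sphere_zero_iff_norm.1 hx.1).le
        · simpa using (mem_sphere_zero_iff_norm.1 (hEs hx)).le
    have hw1 : ‖w‖ ≤ 1 := by
      have := hzw (MvPolynomial.X 1) 1 ?_
      · simpa using this
      · rintro ⟨x, y⟩ (⟨hx, hy⟩ | ⟨hx, hy⟩)
        · rw [mem_singleton_iff] at hy
          have hy' : y = 0 := hy
          simp [hy']
        · simpa using (mem_sphere_zero_iff_norm.1 hy).le
    by_cases hzE : z ∈ closure I
    · exact Or.inr ⟨hzE, mem_closedBall_zero_iff.2 hw1⟩
    · left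
      refine ⟨mem_closedBall_zero_iff.2 hz1, ?_⟩
      rw [mem_singleton_iff]
      by_contra hw0
      have hwpos : 0 < ‖w‖ := norm_pos_iff.2 hw0
      obtain ⟨q, hq⟩ := sep (closure I) hEs hEcl hEne p hp hpE z hz1 hzE
        (1 / 4) (by norm_num)
      obtain ⟨N, hN⟩ : ∃ N : ℕ, (1 / 2 : ℝ) ^ N < ‖w‖ :=
        exists_pow_lt_of_lt_one hwpos (by norm_num)
      set Q : MvPolynomial (Fin 2) ℂ := (MvPolynomial.X 1) *
        ((1 : MvPolynomial (Fin 2) ℂ) -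
          ((MvPolynomial.X 0) - MvPolynomial.C z) *
            (Polynomial.aeval (MvPolynomial.X 0) q)) ^ N with hQdef
      have hevalQ : ∀ x y : ℂ,
          MvPolynomial.eval ![x, y] Q = y * (1 - (x - z) * q.eval x) ^ N := by
        intro x y
        rw [hQdef]
        simp [eval_aeval]
      have hbnd : ∀ v ∈ ((sphere (0 : ℂ) 1 \ I) ×ˢ ({0} : Set ℂ)) ∪
          (closure I ×ˢ sphere (0 : ℂ) 1),
          ‖MvPolynomial.eval ![v.1, v.2] Q‖ ≤ (1 / 2 : ℝ) ^ N := by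
        rintro ⟨x, y⟩ (⟨hx, hy⟩ | ⟨hx, hy⟩)
        · rw [mem_singleton_iff] at hy
          have hy' : y = 0 := hy
          rw [hevalQ, hy', zero_mul, norm_zero]
          positivity
        · rw [hevalQ, norm_mul, norm_pow, mem_sphere_zero_iff_norm.1 hy, one_mul]
          have hxz0 : x - z ≠ 0 := sub_ne_zero.mpr (fun h => hzE (h ▸ hx))
          have hident : 1 - (x - z) * q.eval x = (x - z) * ((x - z)⁻¹ - q.eval x) := by
            field_simp
          have hb2 : ‖1 - (x - z) * q.eval x‖ ≤ 1 / 2 := by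
            rw [hident, norm_mul]
            have hnb : ‖x - z‖ ≤ 2 := by
              have hx1 : ‖x‖ = 1 := mem_sphere_zero_iff_norm.1 (hEs hx)
              calc ‖x - z‖ ≤ ‖x‖ + ‖z‖ := norm_sub_le _ _
                _ ≤ 2 := by rw [hx1]; linarith
            calc ‖x - z‖ * ‖(x - z)⁻¹ - q.eval x‖ ≤ 2 * (1 / 4) := by
                  apply mul_le_mul hnb (hq x hx) (norm_nonneg _) (by norm_num)
              _ = 1 / 2 := by norm_num
          exact pow_le_pow_left₀ (norm_nonneg _) hb2 N
      have := hzw Q ((1 / 2 : ℝ) ^ N) hbnd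
      rw [hevalQ] at this
      simp only [sub_self, zero_mul, sub_zero, one_pow, mul_one] at this
      exact absurd this (not_le.2 hN)
  · -- RHS ⊆ hull
    rintro (⟨hzB, hw0⟩ | ⟨hzE, hwB⟩) <;> intro P C hbound
    · rw [mem_singleton_iff] at hw0
      have claim : ∀ ζ ∈ sphere (0 : ℂ) 1, ‖MvPolynomial.eval ![ζ, 0] P‖ ≤ C := by
        intro ζ hζ
        by_cases hζI : ζ ∈ I
        · have hb2 : ∀ t ∈ sphere (0 : ℂ) 1, ‖MvPolynomial.eval ![ζ, t] P‖ ≤ C := by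
            intro t ht
            exact hbound (ζ, t) (Or.inr ⟨subset_closure hζI, ht⟩)
          exact maxmod (fun t => MvPolynomial.eval ![ζ, t] P) C
            (diff_eval2 P (fun _ => ζ) (fun t => t) (differentiable_const ζ)
              differentiable_id) hb2 0 (mem_closedBall_self zero_le_one)
        · exact hbound (ζ, 0) (Or.inl ⟨⟨hζ, hζI⟩, rfl⟩)
      have := maxmod (fun ζ => MvPolynomial.eval ![ζ, 0] P) C
        (diff_eval2 P (fun ζ => ζ) (fun _ => 0) differentiable_id
          (differentiable_const 0)) claim z hzB
      have hw0' : w = 0 := hw0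
      subst hw0'
      simpa using this
    · exact maxmod (fun t => MvPolynomial.eval ![z, t] P) C
        (diff_eval2 P (fun _ => z) (fun t => t) (differentiable_const z)
          differentiable_id)
        (fun t ht => hbound (z, t) (Or.inr ⟨hzE, ht⟩)) w hwB
end

section
/- Let g : 𝔻 → 𝔻 be holomorphic such that |g| extends continuously to the closed disc minus a closed null set E ⊂ 𝕋, with |g| = 1 on an open set I ⊂ 𝕋 and |g| < 1 on 𝕋 ∖ closure(I). For r ∈ (0,1) let τ_r(ζ) = rζ. Then |g^ν ∘ τ_r| → 0 locally uniformly on 𝔻 ∪ (𝕋 ∖ closure(I)) as ν → ∞ for any fixed sequence r = r_ν → 1, and there exists a sequence r_ν → 1 such that |g^ν ∘ τ_{r_ν}| → 1 locally uniformly on I. -/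
open Complex MeasureTheory Metric Set Filter Topology

lemma aux_tube {E I : Set ℂ} (hEbd : E = closure I \ I) (hI : I ⊆ sphere (0 : ℂ) 1)
    (h : ℂ → ℝ) (hcont : ContinuousOn h (closedBall (0 : ℂ) 1 \ E))
    (hone : ∀ z ∈ I, h z = 1)
    {K : Set ℂ} (hK : IsCompact K) (hKI : K ⊆ I) {δ : ℝ} (hδ : 0 < δ)
    {a : ℝ} (ha : a ∈ Set.Ico (0 : ℝ) 1) :
    ∃ r : ℝ, r ∈ Set.Ioo a 1 ∧ ∀ z ∈ K, 1 - δ < h (((r : ℝ) : ℂ) * z) := by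
  have hm : Continuous (fun p : ℝ × ℂ => ((p.1 : ℝ) : ℂ) * p.2) :=
    (Complex.continuous_ofReal.comp continuous_fst).mul continuous_snd
  set S : Set (ℝ × ℂ) := Set.Icc (0:ℝ) 1 ×ˢ K with hS
  have hmaps : Set.MapsTo (fun p : ℝ × ℂ => ((p.1 : ℝ) : ℂ) * p.2) S
      (closedBall (0 : ℂ) 1 \ E) := by
    rintro ⟨t, z⟩ ⟨⟨ht0, ht1⟩, hz⟩
    have hz1 : ‖z‖ = 1 := by
      have := hI (hKI hz); simpa [mem_sphere_iff_norm] using this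
    have habs : ‖((t : ℝ) : ℂ) * z‖ = t := by
      simp only [norm_mul, hz1, mul_one, Complex.norm_real, Real.norm_eq_abs]
      exact _root_.abs_of_nonneg ht0
    constructor
    · simp only [mem_closedBall, Complex.dist_eq, sub_zero] at *
      rw [habs]; exact ht1
    · intro hEmem
      have hsph : ‖((t : ℝ) : ℂ) * z‖ = 1 := by
        have := (hEbd ▸ hEmem).1
        have h1 : ((t : ℝ) : ℂ) * z ∈ closure I := this
        have := hI
        have : ((t:ℝ):ℂ) * z ∈ sphere (0:ℂ) 1 := by
          have hcl : closure I ⊆ sphere (0:ℂ) 1 :=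
            closure_minimal hI (isClosed_sphere)
          exact hcl h1
        simpa [mem_sphere_iff_norm] using this
      have ht : t = 1 := by rw [habs] at hsph; exact hsph
      subst ht
      simp only [Complex.ofReal_one, one_mul] at hEmem
      exact ((hEbd ▸ hEmem).2) (hKI hz)
  have hF : ContinuousOn (fun p : ℝ × ℂ => h (((p.1 : ℝ) : ℂ) * p.2)) S :=
    hcont.comp hm.continuousOn hmaps
  obtain ⟨u, hu_open, hu_eq⟩ := continuousOn_iff'.1 hF (Set.Ioi (1 - δ)) isOpen_Ioi
  have hsub : ({(1:ℝ)} ×ˢ K : Set (ℝ × ℂ)) ⊆ u := by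
    rintro ⟨t, z⟩ ⟨ht, hz⟩
    have ht : t = 1 := ht
    subst ht
    have hmemS : ((1:ℝ), z) ∈ S := ⟨⟨zero_le_one, le_refl 1⟩, hz⟩
    have : ((1:ℝ), z) ∈ (fun p : ℝ × ℂ => h (((p.1 : ℝ) : ℂ) * p.2)) ⁻¹' Set.Ioi (1 - δ) ∩ S := by
      refine ⟨?_, hmemS⟩
      have : h (((1:ℝ):ℂ) * z) = 1 := by simpa using hone z (hKI hz)
      simp only [Set.mem_preimage, Set.mem_Ioi, this]
      linarith
    rw [hu_eq] at this
    exact this.1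
  obtain ⟨u1, v, hu1_open, _, h1u1, hKv, huv⟩ :=
    generalized_tube_lemma isCompact_singleton hK hu_open hsub
  obtain ⟨ε, hε, hball⟩ := Metric.isOpen_iff.1 hu1_open 1 (h1u1 rfl)
  set r : ℝ := (max a (1 - ε) + 1) / 2 with hr
  have hra : a < r := by
    have h2 : a ≤ max a (1-ε) := le_max_left _ _
    simp only [hr]
    nlinarith [ha.2]
  have hr1 : r < 1 := by
    have h2 : max a (1-ε) < 1 := max_lt ha.2 (by linarith)
    simp only [hr]; linarith
  have hru1 : r ∈ u1 := by
    apply hball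
    simp only [mem_ball, Real.dist_eq]
    have h3 : 1 - ε < r := by
      have := le_max_right a (1 - ε)
      simp only [hr]; nlinarith
    rw [abs_sub_lt_iff]; constructor <;> linarith
  refine ⟨r, ⟨hra, hr1⟩, fun z hz => ?_⟩
  have hmemS : (r, z) ∈ S := ⟨⟨by linarith [ha.1], hr1.le⟩, hz⟩
  have : (r, z) ∈ u ∩ S := ⟨huv ⟨hru1, hKv hz⟩, hmemS⟩
  rw [← hu_eq] at this
  exact this.1


lemma part1 (E I : Set ℂ) (hE : E ⊆ sphere (0 : ℂ) 1) (hEbd : E = closure I \ I)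
    (g : ℂ → ℂ) (hgD : MapsTo g (ball (0 : ℂ) 1) (ball (0 : ℂ) 1))
    (h : ℂ → ℝ) (hcont : ContinuousOn h (closedBall (0 : ℂ) 1 \ E))
    (hext : ∀ z ∈ ball (0 : ℂ) 1, h z = ‖g z‖)
    (hlt : ∀ z ∈ sphere (0 : ℂ) 1 \ closure I, h z < 1) :
    ∀ r : ℕ → ℝ, (∀ ν, r ν ∈ Set.Ioo (0 : ℝ) 1) → Tendsto r atTop (𝓝 1) →
      TendstoLocallyUniformlyOn
        (fun (ν : ℕ) (z : ℂ) => ‖g (((r ν : ℝ) : ℂ) * z)‖ ^ ν)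
        (fun _ => 0) atTop (ball (0 : ℂ) 1 ∪ (sphere (0 : ℂ) 1 \ closure I)) := by
  intro r hrIoo hrlim
  rw [Metric.tendstoLocallyUniformlyOn_iff]
  intro ε hε x hx
  have hxcb : x ∈ closedBall (0 : ℂ) 1 := by
    rcases hx with hxb | hxs
    · exact ball_subset_closedBall hxb
    · exact sphere_subset_closedBall hxs.1
  have hxE : x ∉ E := by
    rcases hx with hxb | hxs
    · intro hc
      have := hE hc
      rw [mem_sphere_iff_norm, sub_zero] at this
      rw [mem_ball, Complex.dist_eq, sub_zero] at hxb
      linarith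
    · intro hc
      exact hxs.2 ((hEbd ▸ hc).1)
  have hhx : h x < 1 := by
    rcases hx with hxb | hxs
    · rw [hext x hxb]
      have := hgD hxb
      rwa [mem_ball, Complex.dist_eq, sub_zero] at this
    · exact hlt x hxs
  set c : ℝ := max ((h x + 1) / 2) (1 / 2) with hc
  have hc1 : c < 1 := max_lt (by linarith) (by norm_num)
  have hc0 : (0 : ℝ) ≤ c := le_trans (by norm_num) (le_max_right _ _)
  have hxc : h x < c := lt_of_lt_of_le (by linarith) (le_max_left _ _)
  have hcx : ContinuousWithinAt h (closedBall (0 : ℂ) 1 \ E) x := hcont x ⟨hxcb, hxE⟩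
  obtain ⟨O, hOopen, hxO, hOsub⟩ := mem_nhdsWithin.1 (hcx (Iio_mem_nhds hxc))
  obtain ⟨δ, hδ, hballO⟩ := Metric.isOpen_iff.1 hOopen x hxO
  refine ⟨ball x (δ / 2) ∩ (ball (0 : ℂ) 1 ∪ (sphere (0 : ℂ) 1 \ closure I)),
    Filter.inter_mem (mem_nhdsWithin_of_mem_nhds (ball_mem_nhds _ (by linarith)))
      self_mem_nhdsWithin, ?_⟩
  have hev1 : ∀ᶠ ν in atTop, c ^ ν < ε :=
    (tendsto_pow_atTop_nhds_zero_of_lt_one hc0 hc1).eventually_lt_const hε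
  have hev2 : ∀ᶠ ν in atTop, 1 - δ / 2 < r ν :=
    hrlim.eventually_const_lt (by linarith)
  filter_upwards [hev1, hev2] with ν h1 h2
  rintro y ⟨hyball, hys⟩
  have hy1 : ‖y‖ ≤ 1 := by
    rcases hys with hyb | hysph
    · rw [mem_ball, Complex.dist_eq, sub_zero] at hyb
      exact le_of_lt hyb
    · have := hysph.1
      rw [mem_sphere_iff_norm, sub_zero] at this
      exact le_of_eq this
  obtain ⟨hr0, hr1⟩ := hrIoo ν
  have habs : ‖((r ν : ℝ) : ℂ) * y‖ = r ν * ‖y‖ := by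
    rw [norm_mul, Complex.norm_real, Real.norm_eq_abs, _root_.abs_of_nonneg hr0.le]
  have hry_ball : ((r ν : ℝ) : ℂ) * y ∈ ball (0 : ℂ) 1 := by
    rw [mem_ball, Complex.dist_eq, sub_zero, habs]
    calc r ν * ‖y‖ ≤ r ν * 1 := by
          exact mul_le_mul_of_nonneg_left hy1 hr0.le
      _ < 1 := by linarith
  have hry_O : ((r ν : ℝ) : ℂ) * y ∈ ball x δ := by
    rw [mem_ball]
    have d1 : dist (((r ν : ℝ) : ℂ) * y) y ≤ 1 - r ν := by
      rw [Complex.dist_eq]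
      have : ((r ν : ℝ) : ℂ) * y - y = (((r ν : ℝ) : ℂ) - 1) * y := by ring
      rw [this, norm_mul]
      have : ‖((r ν : ℝ) : ℂ) - 1‖ = 1 - r ν := by
        rw [show ((r ν : ℝ) : ℂ) - 1 = ((r ν - 1 : ℝ) : ℂ) by push_cast; ring,
          Complex.norm_real, Real.norm_eq_abs, abs_of_nonpos (by linarith)]
        ring
      rw [this]
      calc (1 - r ν) * ‖y‖ ≤ (1 - r ν) * 1 :=
            mul_le_mul_of_nonneg_left hy1 (by linarith)
        _ = 1 - r ν := mul_one _
    have d2 : dist y x < δ / 2 := mem_ball.1 hyball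
    calc dist (((r ν : ℝ) : ℂ) * y) x ≤ dist (((r ν : ℝ) : ℂ) * y) y + dist y x :=
          dist_triangle _ _ _
      _ < (1 - r ν) + δ / 2 := by
          apply add_lt_add_of_le_of_lt d1 d2
      _ < δ / 2 + δ / 2 := by linarith
      _ = δ := by ring
  have hry_mem : ((r ν : ℝ) : ℂ) * y ∈ closedBall (0 : ℂ) 1 \ E := by
    refine ⟨ball_subset_closedBall hry_ball, fun hc => ?_⟩
    have h5 := hE hc
    have h6 := hry_ball
    rw [mem_sphere_iff_norm, sub_zero] at h5
    rw [mem_ball, Complex.dist_eq, sub_zero] at h6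
    linarith
  have hvc : h (((r ν : ℝ) : ℂ) * y) < c := hOsub ⟨hballO hry_O, hry_mem⟩
  rw [hext _ hry_ball] at hvc
  have hnn : (0 : ℝ) ≤ ‖g (((r ν : ℝ) : ℂ) * y)‖ := norm_nonneg _
  rw [Real.dist_eq]
  have hple : ‖g (((r ν : ℝ) : ℂ) * y)‖ ^ ν ≤ c ^ ν :=
    pow_le_pow_left₀ hnn hvc.le ν
  have hpnn : (0 : ℝ) ≤ ‖g (((r ν : ℝ) : ℂ) * y)‖ ^ ν := pow_nonneg hnn ν
  rw [abs_of_nonpos (by linarith)]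
  linarith

lemma part2 (E I : Set ℂ) (hEbd : E = closure I \ I)
    (hI : I ⊆ sphere (0 : ℂ) 1) (hIopen : ∃ U : Set ℂ, IsOpen U ∧ I = U ∩ sphere (0 : ℂ) 1)
    (g : ℂ → ℂ) (hgD : MapsTo g (ball (0 : ℂ) 1) (ball (0 : ℂ) 1))
    (h : ℂ → ℝ) (hcont : ContinuousOn h (closedBall (0 : ℂ) 1 \ E))
    (hext : ∀ z ∈ ball (0 : ℂ) 1, h z = ‖g z‖)
    (hone : ∀ z ∈ I, h z = 1) :
    ∃ r : ℕ → ℝ, (∀ ν, r ν ∈ Set.Ioo (0 : ℝ) 1) ∧ Tendsto r atTop (𝓝 1) ∧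
      TendstoLocallyUniformlyOn
        (fun (ν : ℕ) (z : ℂ) => ‖g (((r ν : ℝ) : ℂ) * z)‖ ^ ν)
        (fun _ => 1) atTop I := by
  obtain ⟨U, hUopen, hIU⟩ := hIopen
  set K : ℕ → Set ℂ := fun n =>
    sphere (0 : ℂ) 1 ∩ {z : ℂ | ∀ w ∉ U, 1 / (n + 1 : ℝ) ≤ dist z w} with hK
  have hKcompact : ∀ n, IsCompact (K n) := by
    intro n
    apply (isCompact_sphere (0 : ℂ) 1).inter_right
    have heq : {z : ℂ | ∀ w ∉ U, 1 / (n + 1 : ℝ) ≤ dist z w}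
        = ⋂ w ∈ Uᶜ, {z : ℂ | 1 / (n + 1 : ℝ) ≤ dist z w} := by
      ext z; simp [Set.mem_iInter]
    rw [heq]
    exact isClosed_biInter fun w _ =>
      isClosed_le continuous_const (continuous_id.dist continuous_const)
  have hKI : ∀ n, K n ⊆ I := by
    intro n z hz
    rw [hIU]
    refine ⟨?_, hz.1⟩
    by_contra hzU
    have h0 := hz.2 z hzU
    rw [dist_self] at h0
    have : (0 : ℝ) < 1 / (n + 1 : ℝ) := by positivity
    linarith
  have hKmono : ∀ m n : ℕ, m ≤ n → K m ⊆ K n := by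
    intro m n hmn z hz
    refine ⟨hz.1, fun w hw => ?_⟩
    refine le_trans ?_ (hz.2 w hw)
    apply one_div_le_one_div_of_le (by positivity)
    have : (m : ℝ) ≤ n := Nat.cast_le.2 hmn
    linarith
  have hnbhd : ∀ x ∈ I, ∃ n : ℕ, ball x (1 / (n + 1 : ℝ)) ∩ I ⊆ K n := by
    intro x hx
    rw [hIU] at hx
    obtain ⟨ε, hε, hb⟩ := Metric.isOpen_iff.1 hUopen x hx.1
    obtain ⟨n, hn⟩ := exists_nat_gt (2 / ε)
    refine ⟨n, ?_⟩
    have hn1 : 2 / ε < (n : ℝ) + 1 := by linarith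
    have hεn : 2 / (n + 1 : ℝ) < ε := by
      rw [div_lt_iff₀ (by positivity)]
      rw [div_lt_iff₀ hε] at hn1
      linarith
    rintro y ⟨hyb, hyI⟩
    refine ⟨hI hyI, fun w hw => ?_⟩
    have hxw : ε ≤ dist w x := by
      by_contra hcon
      push_neg at hcon
      exact hw (hb (mem_ball.2 hcon))
    have hxy : dist y x < 1 / (n + 1 : ℝ) := mem_ball.1 hyb
    have tri : dist w x ≤ dist w y + dist y x := dist_triangle _ _ _
    have : dist y w = dist w y := dist_comm _ _
    have h2 : 2 / (↑n + 1 : ℝ) = 2 * (1 / (↑n + 1 : ℝ)) := by ring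
    linarith
  have hchoice : ∀ ν : ℕ, ∃ r : ℝ,
      r ∈ Set.Ioo (max (1 - 1 / (ν + 1 : ℝ)) (1 / 2)) 1 ∧
      ∀ z ∈ K ν, 1 - 1 / ((ν : ℝ) + 1) ^ 2 < h (((r : ℝ) : ℂ) * z) := by
    intro ν
    apply aux_tube hEbd hI h hcont hone (hKcompact ν) (hKI ν)
    · positivity
    · constructor
      · exact le_trans (by norm_num) (le_max_right _ _)
      · apply max_lt ?_ (by norm_num)
        have : (0 : ℝ) < 1 / (ν + 1 : ℝ) := by positivity
        linarith
  choose r hrIoo hrK using hchoice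
  have hrIoo' : ∀ ν, r ν ∈ Set.Ioo (0 : ℝ) 1 := by
    intro ν
    refine ⟨lt_of_lt_of_le ?_ (le_of_lt (lt_of_le_of_lt (le_max_right _ _) (hrIoo ν).1)),
      (hrIoo ν).2⟩
    norm_num
  refine ⟨r, hrIoo', ?_, ?_⟩
  · have low : ∀ ν : ℕ, 1 - 1 / (ν + 1 : ℝ) ≤ r ν :=
      fun ν => le_of_lt (lt_of_le_of_lt (le_max_left _ _) (hrIoo ν).1)
    have hup : ∀ ν : ℕ, r ν ≤ 1 := fun ν => (hrIoo' ν).2.le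
    have hlim : Tendsto (fun ν : ℕ => 1 - 1 / (ν + 1 : ℝ)) atTop (𝓝 1) := by
      have := tendsto_one_div_add_atTop_nhds_zero_nat (𝕜 := ℝ)
      have h2 := (tendsto_const_nhds : Tendsto (fun _ : ℕ => (1 : ℝ)) atTop (𝓝 1)).sub this
      simpa using h2
    exact tendsto_of_tendsto_of_tendsto_of_le_of_le hlim tendsto_const_nhds low hup
  · rw [Metric.tendstoLocallyUniformlyOn_iff]
    intro ε hε x hx
    obtain ⟨n, hn⟩ := hnbhd x hx
    refine ⟨ball x (1 / (n + 1 : ℝ)) ∩ I,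
      Filter.inter_mem (mem_nhdsWithin_of_mem_nhds (ball_mem_nhds _ (by positivity)))
        self_mem_nhdsWithin, ?_⟩
    obtain ⟨N, hN⟩ := exists_nat_gt (1 / ε)
    filter_upwards [eventually_ge_atTop n, eventually_ge_atTop N] with ν hνn hνN
    intro y hy
    have hyK : y ∈ K ν := hKmono n ν hνn (hn hy)
    have hy1 : ‖y‖ = 1 := by
      have := hI (hKI ν hyK)
      rwa [mem_sphere_iff_norm, sub_zero] at this
    obtain ⟨hr0, hr1⟩ := hrIoo' ν
    have hball : ((r ν : ℝ) : ℂ) * y ∈ ball (0 : ℂ) 1 := by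
      rw [mem_ball, Complex.dist_eq, sub_zero, norm_mul, Complex.norm_real, Real.norm_eq_abs, hy1,
        mul_one, _root_.abs_of_nonneg hr0.le]
      exact hr1
    set b : ℝ := ‖g (((r ν : ℝ) : ℂ) * y)‖ with hbdef
    have hb1 : b < 1 := by
      have := hgD hball
      rwa [mem_ball, Complex.dist_eq, sub_zero] at this
    have hb0 : (0 : ℝ) ≤ b := norm_nonneg _
    have hblow : 1 - 1 / ((ν : ℝ) + 1) ^ 2 < b := by
      have := hrK ν y hyK
      rwa [hext _ hball] at this
    have hsq1 : (1 : ℝ) ≤ ((ν : ℝ) + 1) ^ 2 := by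
      have : (0 : ℝ) ≤ (ν : ℝ) := Nat.cast_nonneg ν
      nlinarith
    have hd0 : (0 : ℝ) ≤ 1 - 1 / ((ν : ℝ) + 1) ^ 2 := by
      rw [sub_nonneg]
      exact div_le_one_of_le₀ hsq1 (by positivity)
    have hpow : (1 - 1 / ((ν : ℝ) + 1) ^ 2) ^ ν ≤ b ^ ν :=
      pow_le_pow_left₀ hd0 hblow.le ν
    have hbern : 1 - ν * (1 / ((ν : ℝ) + 1) ^ 2) ≤ (1 - 1 / ((ν : ℝ) + 1) ^ 2) ^ ν := by
      have hm2 : (-2 : ℝ) ≤ -(1 / ((ν : ℝ) + 1) ^ 2) := by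
        have : 1 / ((ν : ℝ) + 1) ^ 2 ≤ 1 := div_le_one_of_le₀ hsq1 (by positivity)
        linarith
      have := one_add_mul_le_pow hm2 ν
      have he1 : (1 : ℝ) + (ν : ℝ) * (-(1 / ((ν : ℝ) + 1) ^ 2))
          = 1 - ν * (1 / ((ν : ℝ) + 1) ^ 2) := by ring
      have he2 : (1 : ℝ) + (-(1 / ((ν : ℝ) + 1) ^ 2)) = 1 - 1 / ((ν : ℝ) + 1) ^ 2 := by ring
      rw [he1, he2] at this
      exact this
    have hbν1 : b ^ ν ≤ 1 := by
      calc b ^ ν ≤ 1 ^ ν := pow_le_pow_left₀ hb0 hb1.le ν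
        _ = 1 := one_pow ν
    have key : (ν : ℝ) * (1 / ((ν : ℝ) + 1) ^ 2) ≤ 1 / ((ν : ℝ) + 1) := by
      have he : (ν : ℝ) * (1 / ((ν : ℝ) + 1) ^ 2) = (ν : ℝ) / ((ν : ℝ) + 1) ^ 2 := by ring
      rw [he, div_le_div_iff₀ (by positivity) (by positivity)]
      nlinarith [Nat.cast_nonneg (α := ℝ) ν]
    have hεν : 1 / ((ν : ℝ) + 1) < ε := by
      have hN1 : (1 : ℝ) / ε < (N : ℝ) := hN
      have hν1 : (N : ℝ) ≤ (ν : ℝ) := Nat.cast_le.2 hνN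
      rw [div_lt_iff₀ (by positivity)]
      rw [div_lt_iff₀ hε] at hN1
      nlinarith
    rw [Real.dist_eq, _root_.abs_of_nonneg (by linarith)]
    linarith

/-- Let `g : 𝔻 → 𝔻` be holomorphic such that `|g|` extends continuously to `𝔻̄ \ E` (extension
`h`), with `h = 1` on a relatively open `I ⊆ 𝕋` and `h < 1` on `𝕋 \ closure I`, where `E ⊆ 𝕋` is
the closed null relative boundary of `I`. Then `|g^ν ∘ τ_{r_ν}| → 0` locally uniformly on
`𝔻 ∪ (𝕋 \ closure I)` for every sequence `r_ν → 1` in `(0,1)`, and there is a sequence `r_ν → 1`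
in `(0,1)` such that `|g^ν ∘ τ_{r_ν}| → 1` locally uniformly on `I`. -/
theorem stmt_12 (E I : Set ℂ) (hEclosed : IsClosed E) (hE : E ⊆ sphere (0 : ℂ) 1)
    (hEnull : sigmaT E = 0) (hEbd : E = closure I \ I)
    (hI : I ⊆ sphere (0 : ℂ) 1) (hIopen : ∃ U : Set ℂ, IsOpen U ∧ I = U ∩ sphere (0 : ℂ) 1)
    (g : ℂ → ℂ) (hg : DifferentiableOn ℂ g (ball (0 : ℂ) 1))
    (hgD : MapsTo g (ball (0 : ℂ) 1) (ball (0 : ℂ) 1))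
    (h : ℂ → ℝ) (hcont : ContinuousOn h (closedBall (0 : ℂ) 1 \ E))
    (hext : ∀ z ∈ ball (0 : ℂ) 1, h z = ‖g z‖)
    (hone : ∀ z ∈ I, h z = 1) (hlt : ∀ z ∈ sphere (0 : ℂ) 1 \ closure I, h z < 1) :
    (∀ r : ℕ → ℝ, (∀ ν, r ν ∈ Set.Ioo (0 : ℝ) 1) → Tendsto r atTop (𝓝 1) →
      TendstoLocallyUniformlyOn
        (fun (ν : ℕ) (z : ℂ) => ‖g (((r ν : ℝ) : ℂ) * z)‖ ^ ν)
        (fun _ => 0) atTop (ball (0 : ℂ) 1 ∪ (sphere (0 : ℂ) 1 \ closure I))) ∧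
    (∃ r : ℕ → ℝ, (∀ ν, r ν ∈ Set.Ioo (0 : ℝ) 1) ∧ Tendsto r atTop (𝓝 1) ∧
      TendstoLocallyUniformlyOn
        (fun (ν : ℕ) (z : ℂ) => ‖g (((r ν : ℝ) : ℂ) * z)‖ ^ ν)
        (fun _ => 1) atTop I) := by
  exact ⟨part1 E I hE hEbd g hgD h hcont hext hlt,
    part2 E I hEbd hI hIopen g hgD h hcont hext hone⟩
end

section
/- Let z₀ ∈ 𝔻 and let ω_𝔻(z₀,·) be harmonic measure of the unit disc at z₀. For a Borel set I ⊂ 𝕋 and a measurable map g : 𝕋 → 𝕋, set μ = g_*(ω_𝔻(z₀,·) restricted to I). If ω_𝔻(z₀,·) restricted to I is absolutely continuous with respect to σ and g is such that μ ≪ σ, then for p_ν(ζ) = ζ^ν the pushforwards (p_ν)_*μ converge weakly to ω_𝔻(z₀,I)·σ. -/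
open Complex MeasureTheory Metric Set Filter Topology

/-- Harmonic measure of the unit disc at `z₀`, as a measure on the circle:
`dω_𝔻(z₀,ζ) = ((1-|z₀|²)/|ζ-z₀|²) dσ(ζ)`. -/
noncomputable def harmonicMeasure (z₀ : ℂ) : Measure ℂ :=
  sigmaT.withDensity fun ζ =>
    ENNReal.ofReal ((1 - ‖z₀‖ ^ 2) / ‖ζ - z₀‖ ^ 2)

section Helpers

open AddCircle

noncomputable def eC (T : ℝ) : AddCircle T → ℂ := fun x => (AddCircle.toCircle x : ℂ)

lemma contE (T : ℝ) : Continuous (eC T) :=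
  continuous_subtype_val.comp AddCircle.continuous_toCircle

lemma injE (T : ℝ) (hT : T ≠ 0) : Function.Injective (eC T) := fun _ _ h =>
  AddCircle.injective_toCircle hT (Subtype.coe_injective h)

lemma embE (T : ℝ) [Fact (0 < T)] : MeasurableEmbedding (eC T) :=
  ((contE T).isClosedEmbedding (injE T (Fact.out : (0:ℝ) < T).ne')).measurableEmbedding

lemma rangeE (T : ℝ) [Fact (0 < T)] : Set.range (eC T) = sphere (0:ℂ) 1 := by
  have hsurj : Function.Surjective (@AddCircle.toCircle T) := by
    intro c
    obtain ⟨x, hx⟩ := (homeomorphCircle (Fact.out : (0:ℝ) < T).ne').surjective c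
    exact ⟨x, by rw [← homeomorphCircle_apply]; exact hx⟩
  have h1 : Set.range (eC T) = ((↑) : Circle → ℂ) '' (Set.range (@AddCircle.toCircle T)) := by
    unfold eC; exact Set.range_comp (fun z : Circle => (z : ℂ)) AddCircle.toCircle
  rw [h1]
  ext z
  constructor
  · rintro ⟨c, _, rfl⟩
    exact c.2
  · intro hz
    obtain ⟨x, hx⟩ := hsurj ⟨z, hz⟩
    exact ⟨_, ⟨x, rfl⟩, congrArg Subtype.val hx⟩

instance : Fact ((0:ℝ) < 2 * Real.pi) := ⟨Real.two_pi_pos⟩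

lemma sigmaT_eq : sigmaT = Measure.map (eC (2 * Real.pi)) AddCircle.haarAddCircle := by
  have h1 : (fun θ : ℝ => Complex.exp (θ * Complex.I))
      = eC (2 * Real.pi) ∘ (QuotientAddGroup.mk : ℝ → AddCircle (2 * Real.pi)) := by
    funext θ
    show _ = (AddCircle.toCircle (θ : AddCircle (2*Real.pi)) : ℂ)
    rw [AddCircle.toCircle_apply_mk, Circle.coe_exp,
      div_self (Real.two_pi_pos.ne'), one_mul]
  have h2 : volume.restrict (Set.Ico (0:ℝ) (2 * Real.pi))
      = volume.restrict (Set.Ioc (0:ℝ) (0 + 2 * Real.pi)) := by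
    rw [zero_add]
    exact Measure.restrict_congr_set Ico_ae_eq_Ioc
  rw [sigmaT, h1, h2, ← Measure.map_map (embE _).measurable (by measurability),
    (AddCircle.measurePreserving_mk (2 * Real.pi) 0).map_eq,
    AddCircle.volume_eq_smul_haarAddCircle, Measure.map_smul, smul_smul,
    ENNReal.inv_mul_cancel (by positivity) ENNReal.ofReal_ne_top, one_smul]

lemma sphere_compl_null : sigmaT ((sphere (0:ℂ) 1)ᶜ) = 0 := by
  rw [sigmaT_eq, Measure.map_apply (embE _).measurable
    (isClosed_sphere.measurableSet.compl)]
  convert measure_empty (μ := (AddCircle.haarAddCircle (T := 2 * Real.pi)))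
  rw [Set.preimage_compl, Set.eq_empty_iff_forall_notMem]
  intro x hx
  exact hx (by rw [← rangeE (2 * Real.pi)]; exact Set.mem_range_self x)


variable {T : ℝ} [hT : Fact (0 < T)]

lemma fourierCoeff_eq_fourierIntegral (F : AddCircle T → ℂ) (k : ℤ) :
    fourierCoeff F k = (1 / T : ℝ) •
      FourierTransform.fourier (Set.indicator (Set.Ioc (0:ℝ) T) (fun x => F x)) (k / T) := by
  rw [fourierCoeff_eq_intervalIntegral F k 0,
    Real.fourier_real_eq_integral_exp_smul]
  have h1 : ∀ v : ℝ, Complex.exp (↑(-2 * Real.pi * v * (↑k / T)) * Complex.I) •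
      Set.indicator (Set.Ioc (0:ℝ) T) (fun x => F x) v
      = Set.indicator (Set.Ioc (0:ℝ) T)
        (fun v => Complex.exp (↑(-2 * Real.pi * v * (↑k / T)) * Complex.I) • F ↑v) v := by
    intro v
    by_cases hv : v ∈ Set.Ioc (0:ℝ) T
    · rw [Set.indicator_of_mem hv, Set.indicator_of_mem hv]
    · rw [Set.indicator_of_notMem hv, Set.indicator_of_notMem hv, smul_zero]
  rw [integral_congr_ae (Filter.Eventually.of_forall h1)]
  rw [integral_indicator measurableSet_Ioc, zero_add,
    intervalIntegral.integral_of_le hT.out.le]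
  refine congrArg _ ?_
  refine setIntegral_congr_fun measurableSet_Ioc fun x _ => ?_
  refine congrArg (· • F ↑x) ?_
  rw [fourier_coe_apply]
  refine congrArg Complex.exp ?_
  push_cast
  ring

lemma key0 (F : AddCircle T → ℂ) {n : ℤ} (hn : n ≠ 0) :
    Tendsto (fun ν : ℕ => ∫ x, fourier (n * ν) x • F x ∂AddCircle.haarAddCircle) atTop (𝓝 (0:ℂ)) := by
  have hcoeff : ∀ ν : ℕ, (∫ x, fourier (n * ν) x • F x ∂AddCircle.haarAddCircle)
      = fourierCoeff F (-(n * ν)) := by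
    intro ν; simp only [fourierCoeff, neg_neg]
  have hw : Tendsto (fun ν : ℕ => ((-(n * ν) : ℤ) : ℝ) / T) atTop (cocompact ℝ) := by
    have heq : (fun ν : ℕ => ((-(n * ν) : ℤ) : ℝ) / T)
        = fun ν : ℕ => ((-n : ℝ) / T) * (ν : ℝ) := by
      funext ν; push_cast; ring
    rw [cocompact_eq_atBot_atTop, heq]
    rcases hn.lt_or_gt with h | h
    · have h' : (0:ℝ) < -(n:ℝ) / T :=
        div_pos (by push_cast; linarith [(show (n:ℝ) < 0 by exact_mod_cast h)]) hT.out
      exact Tendsto.mono_right (tendsto_natCast_atTop_atTop.const_mul_atTop h') le_sup_right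
    · have h' : -(n:ℝ) / T < 0 :=
        div_neg_of_neg_of_pos (by push_cast; linarith [(show (0:ℝ) < (n:ℝ) by exact_mod_cast h)])
          hT.out
      exact Tendsto.mono_right (tendsto_natCast_atTop_atTop.const_mul_atTop_of_neg h') le_sup_left
  have hRL := ((Real.zero_at_infty_fourier
      (Set.indicator (Set.Ioc (0:ℝ) T) (fun x => F x))).comp hw).const_smul ((1 / T : ℝ))
  rw [smul_zero] at hRL
  refine hRL.congr fun ν => ?_
  rw [Function.comp_apply, ← fourierCoeff_eq_fourierIntegral F (-(n * ν)), hcoeff ν]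

lemma integral_fourier_zero {n : ℤ} (hn : n ≠ 0) :
    ∫ x : AddCircle T, fourier n x ∂AddCircle.haarAddCircle = 0 := by
  have h := fourierCoeff_eq_intervalIntegral (fun _ : AddCircle T => (1:ℂ)) (-n) 0
  simp only [fourierCoeff, neg_neg, smul_eq_mul, mul_one] at h
  rw [h, zero_add]
  have h2 : EqOn (fun x : ℝ => (fourier n (x : AddCircle T) : ℂ))
      (fun x : ℝ => Complex.exp ((2 * Real.pi * Complex.I * n / T) * x)) (uIcc 0 T) := by
    intro x _
    simp only [fourier_coe_apply]
    refine congrArg Complex.exp ?_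
    ring
  rw [intervalIntegral.integral_congr h2, integral_exp_mul_complex]
  · have hc : Complex.exp (2 * Real.pi * Complex.I * n / T * T) = 1 := by
      rw [div_mul_cancel₀ _ (by exact_mod_cast hT.out.ne' : (T:ℂ) ≠ 0)]
      rw [← Complex.exp_int_mul_two_pi_mul_I n]
      refine congrArg Complex.exp ?_
      push_cast; ring
    rw [hc]
    simp
  · exact div_ne_zero (mul_ne_zero (mul_ne_zero (mul_ne_zero two_ne_zero
      (Complex.ofReal_ne_zero.mpr Real.pi_ne_zero)) Complex.I_ne_zero)
      (Int.cast_ne_zero.mpr hn)) (Complex.ofReal_ne_zero.mpr hT.out.ne')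

lemma fourier_nsmul (n : ℤ) (ν : ℕ) (x : AddCircle T) :
    fourier n (ν • x) = fourier (n * ν) x := by
  rw [fourier_apply, fourier_apply, ← natCast_zsmul, smul_smul]

lemma cont_integrable (u : AddCircle T → ℂ) (hu : Continuous u) (μ : Measure (AddCircle T))
    [IsFiniteMeasure μ] : Integrable u μ :=
  hu.integrable_of_hasCompactSupport (HasCompactSupport.of_compactSpace u)

lemma averaging (μ' : Measure (AddCircle T)) [IsFiniteMeasure μ']
    (habs : μ' ≪ haarAddCircle) (ψ : C(AddCircle T, ℂ)) :
    Tendsto (fun ν : ℕ => ∫ x, ψ (ν • x) ∂μ') atTop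
      (𝓝 ((μ' Set.univ).toReal • ∫ x, ψ x ∂AddCircle.haarAddCircle)) := by
  set m : ℝ := (μ' Set.univ).toReal with hm
  have hm0 : 0 ≤ m := ENNReal.toReal_nonneg
  -- integrability of shifted continuous maps
  have hintc : ∀ (φ : C(AddCircle T, ℂ)) (ν : ℕ) (μ'' : Measure (AddCircle T))
      (_ : IsFiniteMeasure μ''), Integrable (fun x => φ (ν • x)) μ'' := fun φ ν μ'' h =>
    cont_integrable _ (φ.continuous.comp (continuous_nsmul ν)) μ''
  -- norm bound
  have hbound : ∀ (φ : C(AddCircle T, ℂ)) (ν : ℕ), ‖∫ x, φ (ν • x) ∂μ'‖ ≤ ‖φ‖ * m :=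
    fun φ ν => norm_integral_le_of_norm_le_const
      (Filter.Eventually.of_forall fun x => φ.norm_coe_le_norm _)
  -- the span case
  have hspan : ∀ ψ' ∈ Submodule.span ℂ (Set.range (@fourier T)),
      Tendsto (fun ν : ℕ => ∫ x, ψ' (ν • x) ∂μ') atTop
        (𝓝 (m • ∫ x, ψ' x ∂AddCircle.haarAddCircle)) := by
    intro ψ' hψ'
    induction hψ' using Submodule.span_induction with
    | mem φ hφ =>
      obtain ⟨n, rfl⟩ := hφ
      by_cases hn : n = 0
      · subst hn
        have h1 : ∀ ν : ℕ, ∫ x, fourier (T := T) 0 (ν • x) ∂μ' = m • (1:ℂ) := by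
          intro ν
          simp only [fourier_zero]
          rw [integral_const]
          rfl
        have h2 : (m • ∫ x : AddCircle T, fourier 0 x ∂AddCircle.haarAddCircle) = m • (1:ℂ) := by
          simp only [fourier_zero, integral_const, measure_univ, ENNReal.toReal_one, probReal_univ, one_smul]
        rw [h2]
        exact tendsto_const_nhds.congr fun ν => (h1 ν).symm
      · have hlim : (m • ∫ x : AddCircle T, fourier n x ∂AddCircle.haarAddCircle) = 0 := by
          rw [integral_fourier_zero hn, smul_zero]
        rw [hlim]
        have heq : ∀ ν : ℕ, ∫ x, fourier n (ν • x) ∂μ'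
            = ∫ x, fourier (n * ν) x • (((μ'.rnDeriv haarAddCircle x).toReal : ℂ)) ∂AddCircle.haarAddCircle := by
          intro ν
          rw [← MeasureTheory.integral_rnDeriv_smul habs (f := fun x => fourier n (ν • x))]
          refine integral_congr_ae (Filter.Eventually.of_forall fun x => ?_)
          show (μ'.rnDeriv haarAddCircle x).toReal • fourier n (ν • x)
            = fourier (n * ν) x • ((μ'.rnDeriv haarAddCircle x).toReal : ℂ)
          rw [fourier_nsmul, Complex.real_smul, smul_eq_mul, mul_comm]
        refine (key0 (fun x => ((μ'.rnDeriv haarAddCircle x).toReal : ℂ)) hn).congr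
          fun ν => (heq ν).symm
    | zero => simp
    | add φ₁ φ₂ _ _ h1 h2 =>
      have := h1.add h2
      rw [← smul_add, ← integral_add (cont_integrable _ φ₁.continuous _)
        (cont_integrable _ φ₂.continuous _)] at this
      refine this.congr fun ν => ?_
      rw [← integral_add (hintc φ₁ ν μ' inferInstance) (hintc φ₂ ν μ' inferInstance)]
      rfl
    | smul c φ _ h =>
      have := h.const_smul c
      rw [smul_comm c m, ← integral_smul] at this
      refine this.congr fun ν => ?_
      rw [← integral_smul]
      rfl
  -- density argument
  have hdense : (ψ : C(AddCircle T, ℂ)) ∈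
      closure ((Submodule.span ℂ (Set.range (@fourier T)) : Submodule ℂ _) : Set _) := by
    have h := span_fourier_closure_eq_top (T := T)
    have : ψ ∈ (Submodule.span ℂ (Set.range (@fourier T))).topologicalClosure := by
      rw [h]; trivial
    exact this
  rw [Metric.tendsto_atTop]
  intro ε hε
  have hδ : 0 < ε / (3 * (m + 1)) := by positivity
  obtain ⟨ψ', hψ'mem, hψ'close⟩ := Metric.mem_closure_iff.mp hdense _ hδ
  have hdist : ‖ψ - ψ'‖ < ε / (3 * (m + 1)) := by
    rw [← dist_eq_norm]; exact hψ'close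
  have htend := hspan ψ' hψ'mem
  rw [Metric.tendsto_atTop] at htend
  obtain ⟨N, hN⟩ := htend (ε / 3) (by positivity)
  refine ⟨N, fun ν hν => ?_⟩
  have key1 : dist (∫ x, ψ (ν • x) ∂μ') (∫ x, ψ' (ν • x) ∂μ') ≤ ε / 3 := by
    rw [dist_eq_norm, ← integral_sub (hintc ψ ν μ' inferInstance) (hintc ψ' ν μ' inferInstance)]
    have : (∫ x, (ψ (ν • x) - ψ' (ν • x)) ∂μ') = ∫ x, (ψ - ψ') (ν • x) ∂μ' := by
      refine integral_congr_ae (Filter.Eventually.of_forall fun x => ?_); rfl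
    rw [this]
    calc ‖∫ x, (ψ - ψ') (ν • x) ∂μ'‖ ≤ ‖ψ - ψ'‖ * m := hbound _ ν
      _ ≤ (ε / (3 * (m + 1))) * (m + 1) := by
          apply mul_le_mul hdist.le (by linarith) hm0 hδ.le
      _ = ε / 3 := by field_simp
  have key3 : dist (m • ∫ x, ψ' x ∂AddCircle.haarAddCircle) (m • ∫ x, ψ x ∂haarAddCircle) ≤ ε / 3 := by
    rw [dist_eq_norm, ← smul_sub, ← integral_sub (cont_integrable _ ψ'.continuous _)
      (cont_integrable _ ψ.continuous _)]
    have : (∫ x, (ψ' x - ψ x) ∂AddCircle.haarAddCircle) = ∫ x, (ψ' - ψ) x ∂haarAddCircle := by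
      refine integral_congr_ae (Filter.Eventually.of_forall fun x => ?_); rfl
    rw [this, norm_smul]
    have hb : ‖∫ x, (ψ' - ψ) x ∂AddCircle.haarAddCircle‖ ≤ ‖ψ' - ψ‖ * 1 := by
      have := norm_integral_le_of_norm_le_const (μ := (AddCircle.haarAddCircle : Measure (AddCircle T)))
        (Filter.Eventually.of_forall fun x => (ψ' - ψ).norm_coe_le_norm x)
      simpa using this
    have hb2 : ‖ψ' - ψ‖ < ε / (3 * (m + 1)) := by rwa [norm_sub_rev]
    calc ‖m‖ * ‖∫ x, (ψ' - ψ) x ∂AddCircle.haarAddCircle‖ ≤ m * (‖ψ' - ψ‖ * 1) := by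
          rw [Real.norm_of_nonneg hm0]
          exact mul_le_mul_of_nonneg_left hb hm0
      _ ≤ (m + 1) * (ε / (3 * (m + 1))) := by
          rw [mul_one]
          exact mul_le_mul (by linarith) hb2.le (norm_nonneg _) (by linarith)
      _ = ε / 3 := by field_simp
  have h4 := dist_triangle4 (∫ x, ψ (ν • x) ∂μ') (∫ x, ψ' (ν • x) ∂μ')
    (m • ∫ x, ψ' x ∂AddCircle.haarAddCircle) (m • ∫ x, ψ x ∂haarAddCircle)
  have h5 := hN ν hν
  linarith

end Helpers

/-- Averaging lemma applied to `μ = g_*(ω_𝔻(z₀,·)|_I)`: if `ω_𝔻(z₀,·)|_I ≪ σ` and `μ ≪ σ`, then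
the pushforwards of `μ` under `ζ ↦ ζ^ν` converge weakly to `ω_𝔻(z₀,I)·σ`. -/
theorem stmt_14 (z₀ : ℂ) (hz₀ : z₀ ∈ ball (0 : ℂ) 1)
    (I : Set ℂ) (hI : I ⊆ sphere (0 : ℂ) 1) (hIm : MeasurableSet I)
    (g : ℂ → ℂ) (hgm : Measurable g) (hgT : MapsTo g (sphere (0 : ℂ) 1) (sphere (0 : ℂ) 1))
    (habs : (harmonicMeasure z₀).restrict I ≪ sigmaT)
    (hμabs : Measure.map g ((harmonicMeasure z₀).restrict I) ≪ sigmaT) :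
    ∀ f : ℂ → ℂ, Continuous f →
      Tendsto
        (fun ν : ℕ =>
          ∫ z, f z ∂(Measure.map (fun ζ : ℂ => ζ ^ ν)
            (Measure.map g ((harmonicMeasure z₀).restrict I))))
        atTop (𝓝 ((harmonicMeasure z₀ I).toReal • ∫ z, f z ∂sigmaT)) := by
  intro f hf
  set μ : Measure ℂ := Measure.map g ((harmonicMeasure z₀).restrict I) with hμdef
  -- finiteness of harmonic measure restricted to I
  have hz₀' : ‖z₀‖ < 1 := by
    simpa [Complex.dist_eq] using mem_ball.mp hz₀
  have hfinI : harmonicMeasure z₀ I < ⊤ := by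
    rw [harmonicMeasure, withDensity_apply _ hIm]
    set C := ENNReal.ofReal ((1 - ‖z₀‖ ^ 2) / (1 - ‖z₀‖) ^ 2) with hC
    have hb : ∀ ζ ∈ I, ENNReal.ofReal ((1 - ‖z₀‖ ^ 2) / ‖ζ - z₀‖ ^ 2) ≤ C := by
      intro ζ hζ
      have hζs : ‖ζ‖ = 1 := by
        have := hI hζ
        simpa [Complex.dist_eq] using mem_sphere_iff_norm.mp this
      have habs0 : 0 ≤ ‖z₀‖ := norm_nonneg z₀
      have h1 : 1 - ‖z₀‖ ≤ ‖ζ - z₀‖ := by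
        have h := norm_sub_norm_le ζ z₀
        rw [hζs] at h
        linarith
      have h2 : (1 - ‖z₀‖) ^ 2 ≤ ‖ζ - z₀‖ ^ 2 := by
        apply sq_le_sq' <;> nlinarith [norm_nonneg (ζ - z₀)]
      apply ENNReal.ofReal_le_ofReal
      exact div_le_div_of_nonneg_left (by nlinarith) (by nlinarith) h2
    calc ∫⁻ ζ in I, ENNReal.ofReal ((1 - ‖z₀‖ ^ 2) / ‖ζ - z₀‖ ^ 2) ∂sigmaT
        ≤ ∫⁻ _ in I, C ∂sigmaT := setLIntegral_mono measurable_const hb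
      _ = C * sigmaT I := by rw [setLIntegral_const]
      _ < ⊤ := by
          apply ENNReal.mul_lt_top ENNReal.ofReal_lt_top
          calc sigmaT I ≤ sigmaT Set.univ := measure_mono (Set.subset_univ I)
            _ = 1 := by
                rw [sigmaT_eq, Measure.map_apply (embE _).measurable MeasurableSet.univ,
                  Set.preimage_univ, measure_univ]
            _ < ⊤ := ENNReal.one_lt_top
  have hμuniv : μ Set.univ = harmonicMeasure z₀ I := by
    rw [hμdef, Measure.map_apply hgm MeasurableSet.univ, Set.preimage_univ,
      Measure.restrict_apply_univ]
  haveI : IsFiniteMeasure μ := ⟨by rw [hμuniv]; exact hfinI⟩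
  have hμsph : μ ((sphere (0:ℂ) 1)ᶜ) = 0 := hμabs sphere_compl_null
  -- pull back to the additive circle
  set T : ℝ := 2 * Real.pi with hTdef
  set μ' : Measure (AddCircle T) := Measure.comap (eC T) μ with hμ'def
  have hemb : MeasurableEmbedding (eC T) := embE T
  have hμ'univ : μ' Set.univ = μ Set.univ := by
    rw [hμ'def, hemb.comap_apply, Set.image_univ, rangeE]
    have h := measure_add_measure_compl (μ := μ) (isClosed_sphere : IsClosed (sphere (0:ℂ) 1)).measurableSet
    rw [hμsph, add_zero] at h
    exact h
  haveI : IsFiniteMeasure μ' := ⟨by rw [hμ'univ]; exact (measure_lt_top μ _)⟩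
  have hmapμ' : Measure.map (eC T) μ' = μ := by
    rw [hμ'def, hemb.map_comap, rangeE, Measure.restrict_eq_self_of_ae_mem]
    rw [Filter.eventually_iff, mem_ae_iff, Set.setOf_mem_eq]
    exact hμsph
  have habs' : μ' ≪ (AddCircle.haarAddCircle : Measure (AddCircle T)) := by
    refine Measure.AbsolutelyContinuous.mk fun s hs hs0 => ?_
    rw [hμ'def, hemb.comap_apply]
    apply hμabs
    rw [sigmaT_eq, Measure.map_apply hemb.measurable (hemb.measurableSet_image' hs),
      Set.preimage_image_eq _ hemb.injective]
    exact hs0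
  -- the test function on the additive circle
  set ψ : C(AddCircle T, ℂ) := ⟨fun x => f (eC T x), hf.comp (contE T)⟩ with hψdef
  have hpow : ∀ (ν : ℕ) (x : AddCircle T), (eC T x) ^ ν = eC T (ν • x) := by
    intro ν x
    show ((AddCircle.toCircle x : ℂ)) ^ ν = ((AddCircle.toCircle (ν • x) : ℂ))
    have h : AddCircle.toCircle (ν • x) = (AddCircle.toCircle x) ^ ν := by
      induction ν with
      | zero => simp [AddCircle.toCircle_zero]
      | succ k ih => rw [succ_nsmul, AddCircle.toCircle_add, ih, pow_succ]
    rw [h]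
    push_cast
    rfl
  have hseq : ∀ ν : ℕ, (∫ z, f z ∂(Measure.map (fun ζ : ℂ => ζ ^ ν) μ))
      = ∫ x, ψ (ν • x) ∂μ' := by
    intro ν
    rw [integral_map (continuous_pow ν).measurable.aemeasurable hf.aestronglyMeasurable]
    rw [← hmapμ', integral_map hemb.measurable.aemeasurable
      ((show Continuous fun x : ℂ => f (x ^ ν) from hf.comp (continuous_pow ν)).aestronglyMeasurable)]
    exact integral_congr_ae (Filter.Eventually.of_forall fun x => by
      show f ((eC T x) ^ ν) = ψ (ν • x)
      rw [hpow ν x]; rfl)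
  have hrhs : (harmonicMeasure z₀ I).toReal • (∫ z, f z ∂sigmaT)
      = (μ' Set.univ).toReal • ∫ x, ψ x ∂AddCircle.haarAddCircle := by
    rw [hμ'univ, hμuniv, sigmaT_eq, integral_map hemb.measurable.aemeasurable
      hf.aestronglyMeasurable]
    rfl
  rw [funext hseq, hrhs]
  exact averaging μ' habs' ψ
end
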